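/- arXiv:2309.01980 — 5 statements merged into one kernel-verified Lean document; each statement's English description precedes it below -/
import Mathlib

section
/- Let h : ℝ^m → ℝ ∪ {∞} be proper, lower semicontinuous, and prox-bounded, and assume that dom h is closed. Then for every z̄ ∈ ℝ^m, the joint limit as z' → z̄ and μ ↓ 0 of inf_{z ∈ dom h} { μ·h(z) + ½‖z − z'‖² } exists and equals ½·dist(z̄, dom h)². -/
open Filter Topology Bornology

noncomputable section

/-- Euclidean space `ℝ^d`. -/
abbrev Euc (d : ℕ) := EuclideanSpace ℝ (Fin d)

namespace Paper

variable {n m : ℕ}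

/-- The effective domain of an extended-real-valued function. -/
def edom (g : Euc m → EReal) : Set (Euc m) := {z | g z < ⊤}

/-- `g` maps into `ℝ ∪ {∞}` and is proper (its domain is nonempty). -/
def ProperFn (g : Euc m → EReal) : Prop := (∀ z, g z ≠ ⊥) ∧ ∃ z, g z < ⊤

/-- `z ↦ g z + ‖z‖²/(2μ)` is bounded below. -/
def ProxBoundedWith (g : Euc m → EReal) (μ : ℝ) : Prop :=
  ∃ b : ℝ, ∀ z, (b : EReal) ≤ g z + ((‖z‖ ^ 2 / (2 * μ) : ℝ) : EReal)

/-- `g` is prox-bounded. -/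
def ProxBounded (g : Euc m → EReal) : Prop := ∃ μ : ℝ, 0 < μ ∧ ProxBoundedWith g μ

/-- `0 < μ < μ_g`, where `μ_g` is the threshold of prox-boundedness of `g`. -/
def BelowThreshold (g : Euc m → EReal) (μ : ℝ) : Prop :=
  0 < μ ∧ ∃ μ' : ℝ, μ < μ' ∧ ProxBoundedWith g μ'

/-- The tangent cone to `Ω` at `wbar`. -/
def tangentCone {E : Type*} [NormedAddCommGroup E] [NormedSpace ℝ E]
    (Ω : Set E) (wbar : E) : Set E :=
  {v | ∃ (t : ℕ → ℝ) (w : ℕ → E), (∀ k, 0 < t k) ∧ Tendsto t atTop (𝓝 0) ∧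
        Tendsto w atTop (𝓝 v) ∧ ∀ k, wbar + t k • w k ∈ Ω}

/-- The regular (Fréchet) subdifferential of `g` at `zbar`. -/
def regSubdiff (g : Euc m → EReal) (zbar : Euc m) : Set (Euc m) :=
  {v | 0 ≤ liminf (fun z : Euc m =>
      (g z - g zbar - ((inner ℝ v (z - zbar) : ℝ) : EReal)) / ((‖z - zbar‖ : ℝ) : EReal))
      (𝓝[≠] zbar)}

/-- The limiting (Mordukhovich) subdifferential of `g` at `zbar`. -/
def limSubdiff (g : Euc m → EReal) (zbar : Euc m) : Set (Euc m) :=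
  {v | ∃ zs vs : ℕ → Euc m, Tendsto zs atTop (𝓝 zbar) ∧
        Tendsto (fun k => g (zs k)) atTop (𝓝 (g zbar)) ∧
        Tendsto vs atTop (𝓝 v) ∧ ∀ k, vs k ∈ regSubdiff g (zs k)}

/-- The subderivative `dg(zbar)(v)`. -/
def subderiv (g : Euc m → EReal) (zbar v : Euc m) : EReal :=
  liminf (fun p : ℝ × Euc m => (g (zbar + p.1 • p.2) - g zbar) / ((p.1 : ℝ) : EReal))
    ((𝓝[>] (0 : ℝ)) ×ˢ 𝓝 v)

/-- The second subderivative `d²g(zbar, ybar)(v)`. -/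
def secondSubderiv (g : Euc m → EReal) (zbar ybar v : Euc m) : EReal :=
  liminf (fun p : ℝ × Euc m =>
      (g (zbar + p.1 • p.2) - g zbar - ((p.1 * (inner ℝ ybar p.2 : ℝ) : ℝ) : EReal)) /
        ((p.1 ^ 2 / 2 : ℝ) : EReal))
    ((𝓝[>] (0 : ℝ)) ×ˢ 𝓝 v)

/-- The Lagrangian `L(·, y) = f + ⟨y, c ·⟩` of (P). -/
def LagFn (f : Euc n → ℝ) (c : Euc n → Euc m) (y : Euc m) : Euc n → ℝ :=
  fun x => f x + (inner ℝ y (c x) : ℝ)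

/-- `∇ₓL(xbar, y) = 0`. -/
def gradLagZero (f : Euc n → ℝ) (c : Euc n → Euc m) (xbar : Euc n) (y : Euc m) : Prop :=
  fderiv ℝ (LagFn f c y) xbar = 0

/-- The set `Λ(xbar)` of Lagrange multipliers of the M-stationarity system at `xbar`. -/
def Lambda (f : Euc n → ℝ) (c : Euc n → Euc m) (g : Euc m → EReal) (xbar : Euc n) :
    Set (Euc m) :=
  {y | gradLagZero f c xbar y ∧ y ∈ limSubdiff g (c xbar)}

/-- `∇²ₓₓL(xbar, y)[u, w]`. -/
def hessLag (f : Euc n → ℝ) (c : Euc n → Euc m) (xbar : Euc n) (y : Euc m) (u w : Euc n) : ℝ :=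
  iteratedFDeriv ℝ 2 (LagFn f c y) xbar ![u, w]

/-- The critical cone `C(xbar)` of (P). -/
def critCone (f : Euc n → ℝ) (c : Euc n → Euc m) (g : Euc m → EReal) (xbar : Euc n) :
    Set (Euc n) :=
  {u | ((fderiv ℝ f xbar u : ℝ) : EReal) + subderiv g (c xbar) (fderiv ℝ c xbar u) ≤ 0}

/-- The directional multiplier set `Λ(xbar, u)`. -/
def dirLambda (f : Euc n → ℝ) (c : Euc n → Euc m) (g : Euc m → EReal) (xbar : Euc n)
    (u : Euc n) : Set (Euc m) :=
  {y | gradLagZero f c xbar y ∧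
    subderiv g (c xbar) (fderiv ℝ c xbar u) = ((inner ℝ y (fderiv ℝ c xbar u) : ℝ) : EReal) ∧
    secondSubderiv g (c xbar) y (fderiv ℝ c xbar u) ≠ ⊥}

/-- The second-order sufficient condition (SOSC) for (P) at `xbar`. -/
def SOSC (f : Euc n → ℝ) (c : Euc n → Euc m) (g : Euc m → EReal) (xbar : Euc n) : Prop :=
  ∀ u ∈ critCone f c g xbar, u ≠ 0 → ∃ y ∈ dirLambda f c g xbar u,
    0 < ((hessLag f c xbar y u u : ℝ) : EReal) + secondSubderiv g (c xbar) y (fderiv ℝ c xbar u)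

/-- The stationarity residual `Θ(x, z, y)`; the distance to the (possibly empty)
subdifferential is taken in `EReal` via an infimum. -/
def Theta (f : Euc n → ℝ) (c : Euc n → Euc m) (g : Euc m → EReal)
    (x : Euc n) (z y : Euc m) : EReal :=
  ((‖fderiv ℝ (LagFn f c y) x‖ + ‖c x - z‖ : ℝ) : EReal) +
    ⨅ v ∈ limSubdiff g z, ((‖y - v‖ : ℝ) : EReal)

/-- The graphical derivative `D(∂g)(zbar, ybar)(v)` of the limiting subdifferential mapping. -/
def gDeriv (g : Euc m → EReal) (zbar ybar v : Euc m) : Set (Euc m) :=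
  {η | (v, η) ∈ tangentCone {p : Euc m × Euc m | p.2 ∈ limSubdiff g p.1} (zbar, ybar)}

/-- The Moreau envelope `g^μ(w)`. -/
def moreau (g : Euc m → EReal) (μ : ℝ) (w : Euc m) : EReal :=
  ⨅ z, (g z + ((‖z - w‖ ^ 2 / (2 * μ) : ℝ) : EReal))

/-- The augmented Lagrangian `L_μ(x, y)` of (P). -/
def ALfun (f : Euc n → ℝ) (c : Euc n → Euc m) (g : Euc m → EReal) (μ : ℝ)
    (x : Euc n) (y : Euc m) : EReal :=
  (f x : EReal) + moreau g μ (c x + μ • y) - ((μ / 2 * ‖y‖ ^ 2 : ℝ) : EReal)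

/-- `xbar` is a strict local minimizer of (P). -/
def StrictLocalMin (f : Euc n → ℝ) (c : Euc n → Euc m) (g : Euc m → EReal)
    (xbar : Euc n) : Prop :=
  c xbar ∈ edom g ∧ ∃ ρ : ℝ, 0 < ρ ∧ ∀ x : Euc n, ‖x - xbar‖ ≤ ρ → c x ∈ edom g → x ≠ xbar →
    (f xbar : EReal) + g (c xbar) < (f x : EReal) + g (c x)

open Classical in
/-- A sequence generated by the safeguarded implicit augmented Lagrangian method
(Algorithm 4.1) for problem (P). -/
structure ALMSeq (n m : ℕ) (f : Euc n → ℝ) (c : Euc n → Euc m) (g : Euc m → EReal) where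
  /-- sufficient-decrease parameter -/
  θ : ℝ
  /-- penalty-reduction parameter -/
  κ : ℝ
  hθ : 0 < θ ∧ θ < 1
  hκ : 0 < κ ∧ κ < 1
  /-- safeguarding set -/
  Y : Set (Euc m)
  hYne : Y.Nonempty
  hYbdd : IsBounded Y
  /-- primal iterates -/
  x : ℕ → Euc n
  /-- auxiliary (certificate) iterates -/
  z : ℕ → Euc m
  /-- safeguarded multiplier estimates -/
  yhat : ℕ → Euc m
  /-- multiplier iterates -/
  y : ℕ → Euc m
  /-- penalty parameters -/
  μ : ℕ → ℝ
  /-- inner tolerances -/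
  ε : ℕ → ℝ
  hyhatY : ∀ k, yhat k ∈ Y
  hεnn : ∀ k, 0 ≤ ε k
  hμthr : ∀ k, BelowThreshold g (μ k)
  /-- `z k ∈ prox_{μ_k g}(c(x^k) + μ_k ŷ^k)` -/
  hprox : ∀ k, ∀ w : Euc m,
    g (z k) + ((‖z k - (c (x k) + μ k • yhat k)‖ ^ 2 / (2 * μ k) : ℝ) : EReal) ≤
      g w + ((‖w - (c (x k) + μ k • yhat k)‖ ^ 2 / (2 * μ k) : ℝ) : EReal)
  /-- dual update rule -/
  hy : ∀ k, y k = yhat k + (μ k)⁻¹ • (c (x k) - z k)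
  /-- approximate stationarity for the subproblem, `‖∇ₓL^S_{μ_k}(x^k,z^k,ŷ^k)‖ ≤ ε_k` -/
  hdual : ∀ k, ‖fderiv ℝ (LagFn f c (y k)) (x k)‖ ≤ ε k
  /-- penalty update rule -/
  hμupd : ∀ k, μ (k + 1) =
    if k = 0 ∨ ‖c (x k) - z k‖ ≤ θ * ‖c (x (k - 1)) - z (k - 1)‖ then μ k else κ * μ k

/-! The prox-bound `b ≤ h z + ‖z‖² / (2μ₀)` together with `‖z‖² ≤ 2‖z - w‖² + 2‖w‖²` gives, for
`2μ ≤ μ₀` and `z ∈ dom h`,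
`μ h(z) + ½‖z - w‖² ≥ μ b - (μ/μ₀)‖w‖² + (½ - μ/μ₀) dist(w, dom h)²`,
while a nearest point `ẑ` of the closed set `dom h` to `z̄` gives the upper bound
`μ h(ẑ) + ½‖ẑ - w‖²`. Both bounds are continuous in `(w, μ)` and equal `½ dist(z̄, dom h)²` at
`(z̄, 0)`. -/

theorem prox_objective_lower_bound {E : Type*} [SeminormedAddCommGroup E] {z w : E}
    {μ μ₀ b t D : ℝ} (hμ : 0 ≤ μ) (hμ₀ : 0 < μ₀) (h2μ : 2 * μ ≤ μ₀)
    (hb : b ≤ t + ‖z‖ ^ 2 / (2 * μ₀)) (hD : 0 ≤ D) (hDz : D ≤ ‖z - w‖) :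
    μ * b - μ / μ₀ * ‖w‖ ^ 2 + (1 / 2 - μ / μ₀) * D ^ 2 ≤ μ * t + ‖z - w‖ ^ 2 / 2 := by
  set x := μ / μ₀
  have hx : 0 ≤ x := div_nonneg hμ hμ₀.le
  have hx_half : x ≤ 1 / 2 := by rw [div_le_iff₀ hμ₀]; linarith
  have hμb : μ * b ≤ μ * t + x * (‖z‖ ^ 2 / 2) := by
    have : μ * (t + ‖z‖ ^ 2 / (2 * μ₀)) = μ * t + x * (‖z‖ ^ 2 / 2) := by
      simp only [x]
      field_simp
    exact (mul_le_mul_of_nonneg_left hb hμ).trans_eq this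
  have hz_sq : ‖z‖ ^ 2 / 2 ≤ ‖z - w‖ ^ 2 + ‖w‖ ^ 2 := by
    have := pow_le_pow_left₀ (norm_nonneg z) (norm_le_norm_add_norm_sub' z w) 2
    nlinarith [add_sq_le (a := ‖w‖) (b := ‖z - w‖)]
  have hD_sq : (1 / 2 - x) * D ^ 2 ≤ (1 / 2 - x) * ‖z - w‖ ^ 2 :=
    mul_le_mul_of_nonneg_left (pow_le_pow_left₀ hD hDz 2) (by linarith)
  nlinarith [mul_le_mul_of_nonneg_left hz_sq hx]

theorem tendsto_coe_nhds_prod_nhdsGT_zero {X : Type*} [TopologicalSpace X] {f : X × ℝ → ℝ}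
    (hf : Continuous f) (x : X) {a : ℝ} (ha : f (x, 0) = a) :
    Tendsto (fun p => (f p : EReal)) (𝓝 x ×ˢ 𝓝[>] 0) (𝓝 (a : EReal)) := by
  have hle : 𝓝 x ×ˢ 𝓝[>] (0 : ℝ) ≤ 𝓝 (x, 0) := by
    rw [nhds_prod_eq]
    exact prod_mono le_rfl nhdsWithin_le_nhds
  exact EReal.tendsto_coe.mpr (ha ▸ (hf.tendsto (x, 0)).mono_left hle)

theorem ProxBoundedWith.ne_bot {g : Euc m → EReal} {μ : ℝ} (hg : ProxBoundedWith g μ)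
    (z : Euc m) : g z ≠ ⊥ := by
  obtain ⟨b, hb⟩ := hg
  intro hz
  simpa [hz] using hb z

theorem prox_lower_bound_le_iInf_edom {g : Euc m → EReal} {μ₀ b : ℝ} (hμ₀ : 0 < μ₀)
    (hb : ∀ z, (b : EReal) ≤ g z + ((‖z‖ ^ 2 / (2 * μ₀) : ℝ) : EReal))
    {μ : ℝ} (hμ : 0 ≤ μ) (h2μ : 2 * μ ≤ μ₀) (w : Euc m) :
    ((μ * b - μ / μ₀ * ‖w‖ ^ 2 + (1 / 2 - μ / μ₀) * Metric.infDist w (edom g) ^ 2 : ℝ) : EReal) ≤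
      ⨅ z ∈ edom g, (μ : EReal) * g z + ((‖z - w‖ ^ 2 / 2 : ℝ) : EReal) := by
  refine le_iInf₂ fun z hz => ?_
  have hgz : ((g z).toReal : EReal) = g z :=
    EReal.coe_toReal hz.ne (ProxBoundedWith.ne_bot ⟨b, hb⟩ z)
  have hbz := hb z
  rw [← hgz] at hbz ⊢
  have hD : Metric.infDist w (edom g) ≤ ‖z - w‖ := by
    rw [← dist_eq_norm, dist_comm]
    exact Metric.infDist_le_dist_of_mem hz
  exact_mod_cast prox_objective_lower_bound hμ hμ₀ h2μ (by exact_mod_cast hbz)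
    Metric.infDist_nonneg hD

theorem statement0_general {m : ℕ} (h : Euc m → EReal)
    (hproper : ProperFn h) (hpb : ProxBounded h)
    (hdom : IsClosed (edom h)) (zbar : Euc m) :
    Tendsto
      (fun p : Euc m × ℝ =>
        ⨅ z ∈ edom h, ((p.2 : EReal) * h z + ((‖z - p.1‖ ^ 2 / 2 : ℝ) : EReal)))
      ((𝓝 zbar) ×ˢ (𝓝[>] (0 : ℝ)))
      (𝓝 (((Metric.infDist zbar (edom h)) ^ 2 / 2 : ℝ) : EReal)) := by
  obtain ⟨-, hne⟩ := hproper
  obtain ⟨μ₀, hμ₀, b, hb⟩ := hpb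
  obtain ⟨zhat, hzhat, hdist⟩ := hdom.exists_infDist_eq_dist hne zbar
  set d := Metric.infDist zbar (edom h)
  set r := (h zhat).toReal
  have hr : (r : EReal) = h zhat :=
    EReal.coe_toReal hzhat.ne (ProxBoundedWith.ne_bot ⟨b, hb⟩ zhat)
  have h_lower := tendsto_coe_nhds_prod_nhdsGT_zero (a := d ^ 2 / 2)
    (f := fun p : Euc m × ℝ => p.2 * b - p.2 / μ₀ * ‖p.1‖ ^ 2 +
      (1 / 2 - p.2 / μ₀) * Metric.infDist p.1 (edom h) ^ 2) (by fun_prop) zbar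
    (by simp [d]; ring)
  have h_upper := tendsto_coe_nhds_prod_nhdsGT_zero (a := d ^ 2 / 2)
    (f := fun p : Euc m × ℝ => p.2 * r + ‖zhat - p.1‖ ^ 2 / 2) (by fun_prop) zbar
    (by simp [hdist, dist_eq_norm, norm_sub_rev])
  refine tendsto_of_tendsto_of_tendsto_of_le_of_le' h_lower h_upper ?_ ?_
  · have hsmall : ∀ᶠ μ in 𝓝[>] (0 : ℝ), 0 < μ ∧ 2 * μ < μ₀ := by
      filter_upwards [self_mem_nhdsWithin,
        nhdsWithin_le_nhds (eventually_lt_nhds (half_pos hμ₀))] with μ hμ hμ'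
      exact ⟨hμ, by linarith⟩
    filter_upwards [hsmall.prod_inr (𝓝 zbar)] with p hp
    exact prox_lower_bound_le_iInf_edom hμ₀ hb hp.1.le hp.2.le p.1
  · refine Eventually.of_forall fun p => (iInf₂_le zhat hzhat).trans_eq ?_
    rw [← hr]
    norm_cast

/-- the marginal value of the scaled proximal subproblem converges to
half the squared distance to the domain. -/
theorem statement0 {m : ℕ} (h : Euc m → EReal)
    (hproper : ProperFn h) (hlsc : LowerSemicontinuous h) (hpb : ProxBounded h)
    (hdom : IsClosed (edom h)) (zbar : Euc m) :
    Tendsto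
      (fun p : Euc m × ℝ =>
        ⨅ z ∈ edom h, ((p.2 : EReal) * h z + ((‖z - p.1‖ ^ 2 / 2 : ℝ) : EReal)))
      ((𝓝 zbar) ×ˢ (𝓝[>] (0 : ℝ)))
      (𝓝 (((Metric.infDist zbar (edom h)) ^ 2 / 2 : ℝ) : EReal)) :=
  statement0_general h hproper hpb hdom zbar

end Paper
end
end

section
/- Let h : ℝ^m → ℝ ∪ {∞} be proper, lower semicontinuous, and positively homogeneous of degree 2, i.e., h(αy) = α²·h(y) for all y ∈ ℝ^m and all real α > 0. Then for every z̄ ∈ dom h and every v in the limiting subdifferential ∂h(z̄), one has h(z̄) = ½⟨v, z̄⟩. -/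
open Filter Topology Bornology

noncomputable section

namespace Paper

variable {n m : ℕ}

/-! Let `v` be a regular subgradient of `h` at `z`, with `h z` finite. On the ray through `z`,
`h ((1 + t) • z) = (1 + t) ^ 2 * h z`, so the one-sided derivatives of `h` at `z` in the directions
`z` and `-z` are `2 h z` and `-2 h z`; they bound `⟪v, z⟫` and `⟪v, -z⟫` from above, which gives
Euler's identity `⟪v, z⟫ = 2 h z`. It passes to limiting subgradients because along the defining
sequences `h (z k) → h z̄` and `⟪v k, z k⟫ → ⟪v, z̄⟫`. -/

lemma tendsto_add_smul_nhdsGT_nhdsNE {E : Type*} [NormedAddCommGroup E] [NormedSpace ℝ E]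
    (z : E) {w : E} (hw : w ≠ 0) :
    Tendsto (fun t : ℝ => z + t • w) (𝓝[>] 0) (𝓝[≠] z) := by
  refine tendsto_nhdsWithin_iff.mpr ⟨?_, ?_⟩
  · have hcont : Continuous fun t : ℝ => z + t • w := by fun_prop
    simpa using hcont.tendsto 0 |>.mono_left nhdsWithin_le_nhds
  · filter_upwards [self_mem_nhdsWithin] with t (ht : 0 < t)
    simpa [Set.mem_compl_iff, Set.mem_singleton_iff, add_eq_left, smul_eq_zero] using
      And.intro ht.ne' hw

/-- `hray` and `hq` say that `g` has one-sided derivative `d` at `z` in the direction `w`. -/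
lemma inner_le_of_mem_regSubdiff {g : Euc m → EReal} {z v w : Euc m} {r d : ℝ} {q : ℝ → ℝ}
    (hv : v ∈ regSubdiff g z) (hw : w ≠ 0) (hz : g z = r)
    (hray : ∀ᶠ t in 𝓝[>] 0, g (z + t • w) = ((r + t * q t : ℝ) : EReal))
    (hq : Tendsto q (𝓝[>] 0) (𝓝 d)) :
    inner ℝ v w ≤ d := by
  set F : Euc m → EReal := fun z' =>
    (g z' - g z - ((inner ℝ v (z' - z) : ℝ) : EReal)) / ((‖z' - z‖ : ℝ) : EReal)
  have hw' : 0 < ‖w‖ := norm_pos_iff.mpr hw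
  have hF : (F ∘ fun t : ℝ => z + t • w) =ᶠ[𝓝[>] 0]
      fun t => (((q t - inner ℝ v w) / ‖w‖ : ℝ) : EReal) := by
    filter_upwards [hray, self_mem_nhdsWithin] with t hgt (ht : 0 < t)
    simp only [Function.comp_apply, F, add_sub_cancel_left, real_inner_smul_right, norm_smul,
      Real.norm_eq_abs, abs_of_pos ht, hgt, hz, ← EReal.coe_sub, ← EReal.coe_div]
    congr 1
    field_simp
  have hlim : Tendsto (F ∘ fun t : ℝ => z + t • w) (𝓝[>] 0)
      (𝓝 (((d - inner ℝ v w) / ‖w‖ : ℝ) : EReal)) := by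
    have hquot : Tendsto (fun t => (((q t - inner ℝ v w) / ‖w‖ : ℝ) : EReal)) (𝓝[>] 0)
        (𝓝 (((d - inner ℝ v w) / ‖w‖ : ℝ) : EReal)) :=
      (continuous_coe_real_ereal.tendsto _).comp ((hq.sub_const _).div_const _)
    exact hquot.congr' hF.symm
  have hnonneg : (0 : EReal) ≤ (((d - inner ℝ v w) / ‖w‖ : ℝ) : EReal) :=
    calc (0 : EReal) ≤ liminf F (𝓝[≠] z) := hv
      _ ≤ liminf F (map (fun t : ℝ => z + t • w) (𝓝[>] 0)) :=
        liminf_le_liminf_of_le (tendsto_add_smul_nhdsGT_nhdsNE z hw)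
      _ = _ := (liminf_comp _ _ _).symm.trans (hlim.liminf_eq (f := 𝓝[>] (0 : ℝ)))
  have := (le_div_iff₀ hw').mp (EReal.coe_nonneg.mp hnonneg)
  linarith

lemma apply_smul_of_homogeneous_two {h : Euc m → EReal}
    (hhom : ∀ (y : Euc m) (α : ℝ), 0 < α → h (α • y) = ((α ^ 2 : ℝ) : EReal) * h y)
    {z : Euc m} {r α : ℝ} (hz : h z = r) (hα : 0 < α) :
    h (α • z) = ((α ^ 2 * r : ℝ) : EReal) := by
  rw [hhom z α hα, hz, EReal.coe_mul]

lemma inner_eq_two_mul_of_mem_regSubdiff {h : Euc m → EReal}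
    (hhom : ∀ (y : Euc m) (α : ℝ), 0 < α → h (α • y) = ((α ^ 2 : ℝ) : EReal) * h y)
    {z v : Euc m} {r : ℝ} (hz : h z = r) (hv : v ∈ regSubdiff h z) :
    inner ℝ v z = 2 * r := by
  rcases eq_or_ne z 0 with rfl | hz0
  · have h4 : ((r : ℝ) : EReal) = ((2 ^ 2 * r : ℝ) : EReal) := by
      rw [← hz, ← apply_smul_of_homogeneous_two hhom hz two_pos, smul_zero]
    have hr : r = 2 ^ 2 * r := EReal.coe_eq_coe_iff.mp h4
    rw [inner_zero_right]
    linarith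
  have hupper : inner ℝ v z ≤ 2 * r := by
    refine inner_le_of_mem_regSubdiff (q := fun t => (2 + t) * r) hv hz0 hz ?_ ?_
    · filter_upwards [self_mem_nhdsWithin] with t (ht : 0 < t)
      rw [show z + t • z = (1 + t) • z by rw [add_smul, one_smul],
        apply_smul_of_homogeneous_two hhom hz (by linarith)]
      congr 1
      ring
    · exact ((by fun_prop : Continuous fun t : ℝ => (2 + t) * r).tendsto' 0 _ (by ring))
        |>.mono_left nhdsWithin_le_nhds
  have hlower : inner ℝ v (-z) ≤ -(2 * r) := by
    refine inner_le_of_mem_regSubdiff (q := fun t => (t - 2) * r) hv (neg_ne_zero.mpr hz0) hz ?_ ?_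
    · filter_upwards [self_mem_nhdsWithin, nhdsWithin_le_nhds (gt_mem_nhds one_pos)]
        with t _ (ht : t < 1)
      rw [show z + t • -z = (1 - t) • z by rw [sub_smul, one_smul, smul_neg, sub_eq_add_neg],
        apply_smul_of_homogeneous_two hhom hz (by linarith)]
      congr 1
      ring
    · exact ((by fun_prop : Continuous fun t : ℝ => (t - 2) * r).tendsto' 0 _ (by ring))
        |>.mono_left nhdsWithin_le_nhds
  rw [inner_neg_right] at hlower
  linarith

lemma apply_eq_half_inner_of_mem_regSubdiff {h : Euc m → EReal}
    (hhom : ∀ (y : Euc m) (α : ℝ), 0 < α → h (α • y) = ((α ^ 2 : ℝ) : EReal) * h y)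
    {z v : Euc m} (hbot : h z ≠ ⊥) (htop : h z ≠ ⊤) (hv : v ∈ regSubdiff h z) :
    h z = ((1 / 2 * inner ℝ v z : ℝ) : EReal) := by
  have hz : h z = ((h z).toReal : EReal) := (EReal.coe_toReal htop hbot).symm
  rw [inner_eq_two_mul_of_mem_regSubdiff hhom hz hv, one_div, inv_mul_cancel_left₀ two_ne_zero,
    ← hz]

theorem statement2_general {m : ℕ} (h : Euc m → EReal)
    (hproper : ProperFn h)
    (hhom : ∀ (y : Euc m) (α : ℝ), 0 < α → h (α • y) = ((α ^ 2 : ℝ) : EReal) * h y)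
    (zbar : Euc m) (hzbar : zbar ∈ edom h) (v : Euc m) (hv : v ∈ limSubdiff h zbar) :
    h zbar = ((1 / 2 * (inner ℝ v zbar : ℝ) : ℝ) : EReal) := by
  obtain ⟨zs, vs, hzs, hhz, hvs, hreg⟩ := hv
  have heuler : ∀ᶠ k in atTop, ((1 / 2 * inner ℝ (vs k) (zs k) : ℝ) : EReal) = h (zs k) := by
    filter_upwards [hhz.eventually (eventually_lt_nhds hzbar)] with k hk
    exact (apply_eq_half_inner_of_mem_regSubdiff hhom (hproper.1 _) hk.ne (hreg k)).symm
  have hlim : Tendsto (fun k => ((1 / 2 * inner ℝ (vs k) (zs k) : ℝ) : EReal)) atTop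
      (𝓝 ((1 / 2 * inner ℝ v zbar : ℝ) : EReal)) :=
    (continuous_coe_real_ereal.tendsto _).comp ((hvs.inner hzs).const_mul _)
  exact tendsto_nhds_unique hhz (hlim.congr' heuler)

theorem statement2 {m : ℕ} (h : Euc m → EReal)
    (hproper : ProperFn h) (hlsc : LowerSemicontinuous h)
    (hhom : ∀ (y : Euc m) (α : ℝ), 0 < α → h (α • y) = ((α ^ 2 : ℝ) : EReal) * h y)
    (zbar : Euc m) (hzbar : zbar ∈ edom h) (v : Euc m) (hv : v ∈ limSubdiff h zbar) :
    h zbar = ((1 / 2 * (inner ℝ v zbar : ℝ) : ℝ) : EReal) :=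
  statement2_general h hproper hhom zbar hzbar v hv

end Paper
end
end

section
/- Let x̄ ∈ ℝ^n be a feasible point of problem (P) at which the second-order sufficient condition (SOSC) holds: for every u ∈ C(x̄) \ {0} there exists y ∈ Λ(x̄, u) with ∇²_{xx}L(x̄, y)[u, u] + d²g(c(x̄), y)(c'(x̄)u) > 0. Then there exist constants ε > 0 and β > 0 such that φ(x) − φ(x̄) ≥ (β/2)‖x − x̄‖² for all x with ‖x − x̄‖ ≤ ε; in particular, x̄ is a strict local minimizer of (P). -/
open Filter Topology Bornology

noncomputable section

/-! If quadratic growth fails, there are points `xbar + t_k • u_k` with `t_k ↓ 0` and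
`u_k → u ≠ 0` at which `φ` exceeds `φ xbar` by at most `o(t_k²)`. Writing
`c (xbar + t_k • u_k) = c xbar + t_k • w_k`, we have `w_k → c'(xbar) u`, so the pairs `(t_k, w_k)`
are admissible in the liminfs defining `dg` and `d²g`. The first-order expansion of `f` then
shows that `u` is critical, and for every `y` with `∇ₓL(xbar, y) = 0` the second-order expansion
of `L(·, y)` gives `∇²ₓₓL(xbar, y)[u, u] + d²g(c xbar, y)(c'(xbar) u) ≤ 0`, contradicting SOSC. -/

open Asymptotics

theorem isLittleO_taylor_two {E F : Type*} [NormedAddCommGroup E] [NormedSpace ℝ E]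
    [NormedAddCommGroup F] [NormedSpace ℝ F] {h : E → F} {x₀ : E} {B : E →L[ℝ] E →L[ℝ] F}
    (hd : ∀ᶠ x in 𝓝 x₀, DifferentiableAt ℝ h x) (hB : HasFDerivAt (fderiv ℝ h) B x₀) :
    (fun v => h (x₀ + v) - h x₀ - fderiv ℝ h x₀ v - (1 / 2 : ℝ) • B v v) =o[𝓝 0]
      fun v => ‖v‖ ^ 2 := by
  refine isLittleO_iff.2 fun ε hε => ?_
  have hd₀ : ∀ᶠ w in 𝓝 (0 : E), DifferentiableAt ℝ h (x₀ + w) :=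
    (continuous_const_add x₀).tendsto' 0 x₀ (add_zero x₀) |>.eventually hd
  obtain ⟨δ, hδ, hball⟩ := Metric.eventually_nhds_iff_ball.1
    (((hasFDerivAt_iff_isLittleO_nhds_zero.1 hB).def hε).and hd₀)
  filter_upwards [Metric.ball_mem_nhds (0 : E) hδ] with v hv
  have hsv : ∀ s ∈ Set.Icc (0 : ℝ) 1, ‖s • v‖ ≤ ‖v‖ := fun s hs => by
    rw [norm_smul, Real.norm_of_nonneg hs.1]
    exact mul_le_of_le_one_left (norm_nonneg v) hs.2
  have hsv_mem : ∀ s ∈ Set.Icc (0 : ℝ) 1, s • v ∈ Metric.ball (0 : E) δ := fun s hs =>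
    mem_ball_zero_iff.2 <| (hsv s hs).trans_lt (mem_ball_zero_iff.1 hv)
  -- mean value inequality for the remainder along the segment `s ↦ x₀ + s • v`
  set γ : ℝ → F := fun s => h (x₀ + s • v) - s • fderiv ℝ h x₀ v - (s ^ 2 / 2) • B v v
  have hγ : ∀ s ∈ Set.Icc (0 : ℝ) 1, HasDerivWithinAt γ
      ((fderiv ℝ h (x₀ + s • v) - fderiv ℝ h x₀ - B (s • v)) v) (Set.Icc 0 1) s := by
    intro s hs
    have hline : HasDerivAt (fun s : ℝ => x₀ + s • v) v s := by
      simpa using ((hasDerivAt_id s).smul_const v).const_add x₀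
    have h1 := (hball _ (hsv_mem s hs)).2.hasFDerivAt.comp_hasDerivAt s hline
    have h2 := (hasDerivAt_id s).smul_const (fderiv ℝ h x₀ v)
    have h3 := ((hasDerivAt_pow 2 s).div_const 2).smul_const (B v v)
    convert ((h1.sub h2).sub h3).hasDerivWithinAt using 1
    · rfl
    · simp
  have hbound : ∀ s ∈ Set.Ico (0 : ℝ) 1,
      ‖(fderiv ℝ h (x₀ + s • v) - fderiv ℝ h x₀ - B (s • v)) v‖ ≤ ε * ‖‖v‖ ^ 2‖ := by
    intro s hs
    have hs' := Set.Ico_subset_Icc_self hs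
    calc _ ≤ ‖fderiv ℝ h (x₀ + s • v) - fderiv ℝ h x₀ - B (s • v)‖ * ‖v‖ :=
          ContinuousLinearMap.le_opNorm _ _
      _ ≤ ε * ‖s • v‖ * ‖v‖ := by gcongr; exact (hball _ (hsv_mem s hs')).1
      _ ≤ ε * ‖‖v‖ ^ 2‖ := by
          rw [norm_pow, norm_norm, sq, ← mul_assoc]
          gcongr
          exact hsv s hs'
  convert norm_image_sub_le_of_norm_deriv_le_segment_01' hγ hbound using 2
  simp only [γ]
  norm_num
  abel

theorem tendsto_div_sq_of_fderiv_eq_zero {E ι : Type*} [NormedAddCommGroup E] [NormedSpace ℝ E]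
    {h : E → ℝ} {x₀ : E} {B : E →L[ℝ] E →L[ℝ] ℝ}
    (hd : ∀ᶠ x in 𝓝 x₀, DifferentiableAt ℝ h x) (hB : HasFDerivAt (fderiv ℝ h) B x₀)
    (h₀ : fderiv ℝ h x₀ = 0) {l : Filter ι} {t : ι → ℝ} {u : ι → E} {d : E}
    (ht : ∀ i, t i ≠ 0) (ht0 : Tendsto t l (𝓝 0)) (hu : Tendsto u l (𝓝 d)) :
    Tendsto (fun i => (h (x₀ + t i • u i) - h x₀) / (t i ^ 2 / 2)) l (𝓝 (B d d)) := by
  have hv : Tendsto (fun i => t i • u i) l (𝓝 0) := by simpa using ht0.smul hu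
  have hsq : (fun i => ‖t i • u i‖ ^ 2) =O[l] fun i => t i ^ 2 := by
    have := (isBigO_refl (fun i => t i ^ 2) l).mul ((hu.norm.pow 2).isBigO_one (F := ℝ))
    simpa [norm_smul, mul_pow] using this
  have hrem := ((isLittleO_taylor_two hd hB).comp_tendsto hv).trans_isBigO hsq
  simp only [Function.comp_def, h₀, zero_apply, sub_zero] at hrem
  have hB' : Tendsto (fun i => B (u i) (u i)) l (𝓝 (B d d)) :=
    (B.isBoundedBilinearMap.continuous.tendsto (d, d)).comp (hu.prodMk_nhds hu)
  convert (hrem.tendsto_div_nhds_zero.const_mul 2).add hB' using 2 with i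
  · simp only [map_smul, smul_apply, smul_eq_mul]
    field_simp [ht i]
    ring
  · simp

theorem tendsto_inv_smul_sub_of_differentiableAt {E F ι : Type*} [NormedAddCommGroup E]
    [NormedSpace ℝ E] [NormedAddCommGroup F] [NormedSpace ℝ F] {h : E → F} {x₀ : E}
    (hh : DifferentiableAt ℝ h x₀) {l : Filter ι} {t : ι → ℝ} {u : ι → E} {d : E}
    (ht : ∀ i, t i ≠ 0) (ht0 : Tendsto t l (𝓝 0)) (hu : Tendsto u l (𝓝 d)) :
    Tendsto (fun i => (t i)⁻¹ • (h (x₀ + t i • u i) - h x₀)) l (𝓝 (fderiv ℝ h x₀ d)) :=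
  hh.hasFDerivAt.hasFDerivWithinAt.lim (s := Set.univ) (by simpa using ht0.smul hu)
    (.of_forall fun _ => Set.mem_univ _) (hu.congr fun i => (inv_smul_smul₀ (ht i) _).symm)

theorem liminf_le_of_tendsto_of_le {α β ι : Type*} [CompleteLinearOrder β] [TopologicalSpace β]
    [OrderTopology β] {F : Filter α} {l : Filter ι} [l.NeBot] {Q : α → β} {p : ι → α}
    {r : ι → β} {L : β} (hp : Tendsto p l F) (hle : ∀ i, Q (p i) ≤ r i)
    (hr : Tendsto r l (𝓝 L)) : liminf Q F ≤ L :=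
  calc liminf Q F ≤ liminf (Q ∘ p) l := liminf_le_liminf_of_le hp
    _ ≤ liminf r l := liminf_le_liminf (.of_forall hle)
    _ = L := hr.liminf_eq

theorem EReal.sub_coe_le_coe {x : EReal} {a r : ℝ} (hx : x ≤ ↑(a + r)) : x - a ≤ r :=
  (EReal.sub_le_iff_le_add (.inl (EReal.coe_ne_bot a)) (.inl (EReal.coe_ne_top a))).2 <| by
    rwa [← EReal.coe_add, add_comm]

theorem EReal.sub_coe_div_le_coe {x : EReal} {a r s : ℝ} (hs : 0 ≤ s) (hx : x ≤ ↑(a + r)) :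
    (x - a) / s ≤ ↑(r / s) :=
  EReal.div_le_div_right_of_nonneg (EReal.coe_nonneg.2 hs) (EReal.sub_coe_le_coe hx)

theorem EReal.le_coe_sub_of_coe_add_le {x : EReal} {p q : ℝ} (h : ↑p + x ≤ ↑q) :
    x ≤ ↑(q - p) := by
  rwa [EReal.coe_sub, EReal.le_sub_iff_add_le (.inl (EReal.coe_ne_bot p))
    (.inl (EReal.coe_ne_top p)), add_comm]

theorem tendsto_prod_inv_smul_sub {E F : Type*} [NormedAddCommGroup E]
    [NormedSpace ℝ E] [NormedAddCommGroup F] [NormedSpace ℝ F] {h : E → F} {x₀ : E}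
    (hh : DifferentiableAt ℝ h x₀) {t : ℕ → ℝ} {u : ℕ → E} {d : E}
    (ht : ∀ k, 0 < t k) (ht0 : Tendsto t atTop (𝓝 0)) (hu : Tendsto u atTop (𝓝 d)) :
    Tendsto (fun k => (t k, (t k)⁻¹ • (h (x₀ + t k • u k) - h x₀))) atTop
      (𝓝[>] 0 ×ˢ 𝓝 (fderiv ℝ h x₀ d)) :=
  (tendsto_nhdsWithin_iff.2 ⟨ht0, .of_forall ht⟩).prodMk
    (tendsto_inv_smul_sub_of_differentiableAt hh (fun k => (ht k).ne') ht0 hu)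

def HasQuadraticGrowthAt {E : Type*} [NormedAddCommGroup E] (φ : E → EReal) (x₀ : E) : Prop :=
  ∃ ε : ℝ, 0 < ε ∧ ∃ β : ℝ, 0 < β ∧ ∀ x : E, ‖x - x₀‖ ≤ ε →
    φ x₀ + ((β / 2 * ‖x - x₀‖ ^ 2 : ℝ) : EReal) ≤ φ x

theorem HasQuadraticGrowthAt.exists_lt {E : Type*} [NormedAddCommGroup E] {φ : E → EReal}
    {x₀ : E} {p : ℝ} (hp : φ x₀ = p) (h : HasQuadraticGrowthAt φ x₀) :
    ∃ ε : ℝ, 0 < ε ∧ ∀ x : E, ‖x - x₀‖ ≤ ε → x ≠ x₀ → φ x₀ < φ x := by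
  obtain ⟨ε, hε, β, hβ, hgrowth⟩ := h
  refine ⟨ε, hε, fun x hx hne => lt_of_lt_of_le ?_ (hgrowth x hx)⟩
  have : 0 < β / 2 * ‖x - x₀‖ ^ 2 := by
    have := norm_sub_pos_iff.2 hne
    positivity
  rw [hp, ← EReal.coe_add, EReal.coe_lt_coe_iff]
  linarith

theorem exists_seq_of_not_hasQuadraticGrowthAt {E : Type*} [NormedAddCommGroup E]
    [NormedSpace ℝ E] [ProperSpace E] {φ : E → EReal} {x₀ : E} {p : ℝ} (hp : φ x₀ = p)
    (h : ¬ HasQuadraticGrowthAt φ x₀) :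
    ∃ (t : ℕ → ℝ) (u : ℕ → E) (d : E) (ν : ℕ → ℝ), (∀ k, 0 < t k) ∧
      Tendsto t atTop (𝓝 0) ∧ Tendsto u atTop (𝓝 d) ∧ d ≠ 0 ∧ Tendsto ν atTop (𝓝 0) ∧
      ∀ k, φ (x₀ + t k • u k) ≤ ((p + ν k * (t k ^ 2 / 2) : ℝ) : EReal) := by
  simp only [HasQuadraticGrowthAt, not_exists, not_and, not_forall, not_le] at h
  choose x hxdist hxlt using fun k : ℕ =>
    h (1 / ((k : ℝ) + 1)) (by positivity) (1 / ((k : ℝ) + 1)) (by positivity)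
  have hpos : ∀ k, 0 < ‖x k - x₀‖ := fun k => norm_sub_pos_iff.2 fun hx => by
    simpa [hx, hp] using hxlt k
  have hsphere : ∀ k, ‖x k - x₀‖⁻¹ • (x k - x₀) ∈ Metric.sphere (0 : E) 1 := fun k => by
    simp [norm_smul, (hpos k).ne']
  obtain ⟨d, hd, ψ, hψ, hlim⟩ := (isCompact_sphere (0 : E) 1).tendsto_subseq hsphere
  refine ⟨fun k => ‖x (ψ k) - x₀‖, fun k => ‖x (ψ k) - x₀‖⁻¹ • (x (ψ k) - x₀), d,
    fun k => 1 / ((ψ k : ℝ) + 1), fun k => hpos (ψ k), ?_, hlim, ?_, ?_, fun k => ?_⟩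
  · exact (squeeze_zero (fun k => (hpos k).le) hxdist
      tendsto_one_div_add_atTop_nhds_zero_nat).comp hψ.tendsto_atTop
  · rintro rfl
    simp at hd
  · exact tendsto_one_div_add_atTop_nhds_zero_nat.comp hψ.tendsto_atTop
  · rw [smul_inv_smul₀ (hpos (ψ k)).ne', add_sub_cancel]
    refine (hxlt (ψ k)).le.trans_eq ?_
    rw [hp, ← EReal.coe_add]
    ring_nf

namespace Paper

variable {n m : ℕ}

theorem mem_critCone_of_seq {f : Euc n → ℝ} {c : Euc n → Euc m} {g : Euc m → EReal}
    {xbar : Euc n} {a : ℝ} {t : ℕ → ℝ} {u : ℕ → Euc n} {d : Euc n} {ν : ℕ → ℝ}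
    (hf : DifferentiableAt ℝ f xbar) (hc : DifferentiableAt ℝ c xbar) (ha : g (c xbar) = a)
    (ht : ∀ k, 0 < t k) (ht0 : Tendsto t atTop (𝓝 0)) (hu : Tendsto u atTop (𝓝 d))
    (hν : Tendsto ν atTop (𝓝 0))
    (hdesc : ∀ k, g (c (xbar + t k • u k)) ≤
      ((a + (f xbar - f (xbar + t k • u k) + ν k * (t k ^ 2 / 2)) : ℝ) : EReal)) :
    d ∈ critCone f c g xbar := by
  have hslope : Tendsto (fun k => (f xbar - f (xbar + t k • u k) + ν k * (t k ^ 2 / 2)) / t k)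
      atTop (𝓝 (-fderiv ℝ f xbar d)) := by
    have := (tendsto_inv_smul_sub_of_differentiableAt hf (fun k => (ht k).ne') ht0 hu).neg.add
      ((hν.mul ht0).div_const 2)
    simp only [mul_zero, zero_div, add_zero, smul_eq_mul] at this
    refine this.congr fun k => ?_
    field_simp [(ht k).ne']
    ring
  have hsub : subderiv g (c xbar) (fderiv ℝ c xbar d) ≤ ((-fderiv ℝ f xbar d : ℝ) : EReal) := by
    refine liminf_le_of_tendsto_of_le (tendsto_prod_inv_smul_sub hc ht ht0 hu) (fun k => ?_)
      ((continuous_coe_real_ereal.tendsto _).comp hslope)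
    simp only [smul_inv_smul₀ (ht k).ne', add_sub_cancel, ha, Function.comp_apply]
    exact EReal.sub_coe_div_le_coe (ht k).le (hdesc k)
  calc ((fderiv ℝ f xbar d : ℝ) : EReal) + subderiv g (c xbar) (fderiv ℝ c xbar d)
      ≤ ((fderiv ℝ f xbar d : ℝ) : EReal) + ((-fderiv ℝ f xbar d : ℝ) : EReal) := by gcongr
    _ = 0 := by rw [← EReal.coe_add, add_neg_cancel, EReal.coe_zero]

theorem contDiff_lagFn {k : WithTop ℕ∞} {f : Euc n → ℝ} {c : Euc n → Euc m} (y : Euc m)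
    (hf : ContDiff ℝ k f) (hc : ContDiff ℝ k c) : ContDiff ℝ k (LagFn f c y) :=
  hf.add (contDiff_const.inner ℝ hc)

theorem hessLag_add_secondSubderiv_nonpos_of_seq {f : Euc n → ℝ} {c : Euc n → Euc m}
    {g : Euc m → EReal} {xbar : Euc n} {y : Euc m} {a : ℝ} {t : ℕ → ℝ} {u : ℕ → Euc n}
    {d : Euc n} {ν : ℕ → ℝ} (hL : ContDiff ℝ 2 (LagFn f c y)) (hc : DifferentiableAt ℝ c xbar)
    (hy : gradLagZero f c xbar y) (ha : g (c xbar) = a)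
    (ht : ∀ k, 0 < t k) (ht0 : Tendsto t atTop (𝓝 0)) (hu : Tendsto u atTop (𝓝 d))
    (hν : Tendsto ν atTop (𝓝 0))
    (hdesc : ∀ k, g (c (xbar + t k • u k)) ≤
      ((a + (f xbar - f (xbar + t k • u k) + ν k * (t k ^ 2 / 2)) : ℝ) : EReal)) :
    ((hessLag f c xbar y d d : ℝ) : EReal) + secondSubderiv g (c xbar) y (fderiv ℝ c xbar d)
      ≤ 0 := by
  set L := LagFn f c y
  set H := hessLag f c xbar y d d
  have hL' : ContDiff ℝ 1 (fderiv ℝ L) := hL.fderiv_right (m := 1) (by norm_num)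
  have hcurv : Tendsto (fun k => (L (xbar + t k • u k) - L xbar) / (t k ^ 2 / 2)) atTop (𝓝 H) := by
    simpa [H, hessLag, iteratedFDeriv_two_apply] using tendsto_div_sq_of_fderiv_eq_zero
      (.of_forall fun x => (hL.differentiable (by norm_num)).differentiableAt)
      ((hL'.differentiable one_ne_zero).differentiableAt.hasFDerivAt) hy
      (fun k => (ht k).ne') ht0 hu
  have hquot : Tendsto (fun k => (-(L (xbar + t k • u k) - L xbar) + ν k * (t k ^ 2 / 2)) /
      (t k ^ 2 / 2)) atTop (𝓝 (-H)) := by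
    have := hcurv.neg.add hν
    rw [add_zero] at this
    refine this.congr fun k => ?_
    field_simp [(ht k).ne']
  have hsub : secondSubderiv g (c xbar) y (fderiv ℝ c xbar d) ≤ ((-H : ℝ) : EReal) := by
    refine liminf_le_of_tendsto_of_le (tendsto_prod_inv_smul_sub hc ht ht0 hu) (fun k => ?_)
      ((continuous_coe_real_ereal.tendsto _).comp hquot)
    simp only [smul_inv_smul₀ (ht k).ne', add_sub_cancel, ha, Function.comp_apply,
      inner_smul_right, mul_inv_cancel_left₀ (ht k).ne']
    refine EReal.sub_coe_div_le_coe (by positivity) (EReal.sub_coe_le_coe ((hdesc k).trans_eq ?_))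
    simp only [L, LagFn, inner_sub_right]
    ring_nf
  calc ((H : ℝ) : EReal) + secondSubderiv g (c xbar) y (fderiv ℝ c xbar d)
      ≤ ((H : ℝ) : EReal) + ((-H : ℝ) : EReal) := by gcongr
    _ = 0 := by rw [← EReal.coe_add, add_neg_cancel, EReal.coe_zero]

theorem hasQuadraticGrowthAt_of_sosc {f : Euc n → ℝ} {c : Euc n → Euc m} {g : Euc m → EReal}
    {xbar : Euc n} {a : ℝ} (hf : ContDiff ℝ 2 f) (hc : ContDiff ℝ 2 c) (ha : g (c xbar) = a)
    (hsosc : SOSC f c g xbar) :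
    HasQuadraticGrowthAt (fun x => (f x : EReal) + g (c x)) xbar := by
  by_contra hgrowth
  obtain ⟨t, u, d, ν, ht, ht0, hu, hd, hν, hφ⟩ :=
    exists_seq_of_not_hasQuadraticGrowthAt (p := f xbar + a) (by simp [ha]) hgrowth
  have hdesc : ∀ k, g (c (xbar + t k • u k)) ≤
      ((a + (f xbar - f (xbar + t k • u k) + ν k * (t k ^ 2 / 2)) : ℝ) : EReal) := fun k =>
    (EReal.le_coe_sub_of_coe_add_le (hφ k)).trans_eq (by ring_nf)
  have hfd := hf.differentiable (by norm_num)
  have hcd := hc.differentiable (by norm_num)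
  obtain ⟨y, ⟨hy, -, -⟩, hpos⟩ := hsosc d
    (mem_critCone_of_seq (hfd xbar) (hcd xbar) ha ht ht0 hu hν hdesc) hd
  exact (hpos.trans_le (hessLag_add_secondSubderiv_nonpos_of_seq (contDiff_lagFn y hf hc)
    (hcd xbar) hy ha ht ht0 hu hν hdesc)).false

theorem statement6_general {n m : ℕ}
    (f : Euc n → ℝ) (c : Euc n → Euc m) (g : Euc m → EReal)
    (hf : ContDiff ℝ 2 f) (hc : ContDiff ℝ 2 c)
    (hgp : ProperFn g)
    (xbar : Euc n) (hfeas : c xbar ∈ edom g) (hsosc : SOSC f c g xbar) :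
    (∃ ε : ℝ, 0 < ε ∧ ∃ β : ℝ, 0 < β ∧ ∀ x : Euc n, ‖x - xbar‖ ≤ ε →
      ((f xbar : EReal) + g (c xbar)) + ((β / 2 * ‖x - xbar‖ ^ 2 : ℝ) : EReal)
        ≤ (f x : EReal) + g (c x)) ∧
      StrictLocalMin f c g xbar := by
  obtain ⟨a, ha⟩ : ∃ a : ℝ, g (c xbar) = a :=
    ⟨_, (EReal.coe_toReal hfeas.ne (hgp.1 _)).symm⟩
  have hgrowth := hasQuadraticGrowthAt_of_sosc hf hc ha hsosc
  obtain ⟨ε, hε, hlt⟩ := hgrowth.exists_lt (p := f xbar + a) (by simp [ha])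
  exact ⟨hgrowth, hfeas, ε, hε, fun x hx _ hne => hlt x hx hne⟩

theorem statement6 {n m : ℕ}
    (f : Euc n → ℝ) (c : Euc n → Euc m) (g : Euc m → EReal)
    (hf : ContDiff ℝ 2 f) (hc : ContDiff ℝ 2 c)
    (hgp : ProperFn g) (hglsc : LowerSemicontinuous g) (hgpb : ProxBounded g)
    (hphi : ∃ r : ℝ, (⨅ x : Euc n, ((f x : EReal) + g (c x))) = (r : EReal))
    (xbar : Euc n) (hfeas : c xbar ∈ edom g) (hsosc : SOSC f c g xbar) :
    (∃ ε : ℝ, 0 < ε ∧ ∃ β : ℝ, 0 < β ∧ ∀ x : Euc n, ‖x - xbar‖ ≤ ε →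
      ((f xbar : EReal) + g (c xbar)) + ((β / 2 * ‖x - xbar‖ ^ 2 : ℝ) : EReal)
        ≤ (f x : EReal) + g (c x)) ∧
      StrictLocalMin f c g xbar :=
  statement6_general f c g hf hc hgp xbar hfeas hsosc

end Paper
end
end

section
/- Let x̄ ∈ ℝ^n be an M-stationary point of problem (P) and pick ȳ ∈ Λ(x̄). Assume the qualification condition: whenever u ∈ ℝ^n and η ∈ ℝ^m satisfy 0 = ∇²_{xx}L(x̄, ȳ)u + c'(x̄)^⊤η and η ∈ D(∂g)(c(x̄), ȳ)(c'(x̄)u), then u = 0 and η = 0. Then there exist a constant ρ_u > 0 and a neighborhood U of (x̄, c(x̄), ȳ) such that for every (x, z, y) ∈ U with z ∈ dom g: ‖x − x̄‖ + ‖z − c(x̄)‖ + ‖y − ȳ‖ ≤ ρ_u · Θ(x, z, y). -/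
open Filter Topology Bornology

noncomputable section

namespace Paper

variable {n m : ℕ}

/-! Suppose the bound fails along a sequence `(x_k, z_k, y_k) → (x̄, c x̄, ȳ)` with multipliers
`v_k ∈ ∂g(z_k)`, so that the residual is `o(t_k)` for `t_k` the distance to `(x̄, c x̄, ȳ)`.
The normalised displacements `t_k⁻¹ (x_k - x̄, z_k - c x̄, y_k - ȳ)` lie on the unit sphere, so a
subsequence converges to some `(u, ζ, η)` of norm one. Since `c x_k - z_k = o(t_k)`, the
differentiability of `c` gives `ζ = c'(x̄) u`; since `y_k - v_k = o(t_k)`, the pairs `(z_k, v_k)`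
in the graph of `∂g` show `η ∈ D(∂g)(c x̄, ȳ)(ζ)`; and expanding
`∇ₓL(x_k, y_k) = ∇ₓL(x_k, ȳ) + c'(x_k)ᵀ (y_k - ȳ)` to first order gives
`∇²ₓₓL(x̄, ȳ) u + c'(x̄)ᵀ η = 0`. The qualification condition forces `u = 0`, `η = 0`, hence
`ζ = 0`, which contradicts `‖(u, ζ, η)‖ = 1`. -/

/-- `Θ(x, z, y)` with the distance from `y` to `∂g(z)` replaced by `‖y - v‖`. -/
def resid (f : Euc n → ℝ) (c : Euc n → Euc m) (x : Euc n) (z y v : Euc m) : ℝ :=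
  ‖fderiv ℝ (LagFn f c y) x‖ + ‖c x - z‖ + ‖y - v‖

def QualCond (f : Euc n → ℝ) (c : Euc n → Euc m) (g : Euc m → EReal) (xbar : Euc n)
    (ybar : Euc m) : Prop :=
  ∀ (u : Euc n) (η : Euc m),
    (∀ w : Euc n, hessLag f c xbar ybar u w + (inner ℝ η (fderiv ℝ c xbar w) : ℝ) = 0) →
      η ∈ gDeriv g (c xbar) ybar (fderiv ℝ c xbar u) → u = 0 ∧ η = 0

theorem norm_le_resid (f : Euc n → ℝ) (c : Euc n → Euc m) (x : Euc n) (z y v : Euc m) :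
    ‖fderiv ℝ (LagFn f c y) x‖ ≤ resid f c x z y v ∧ ‖c x - z‖ ≤ resid f c x z y v ∧
      ‖y - v‖ ≤ resid f c x z y v := by
  have h₁ := norm_nonneg (fderiv ℝ (LagFn f c y) x)
  have h₂ := norm_nonneg (c x - z)
  have h₃ := norm_nonneg (y - v)
  exact ⟨by unfold resid; linarith, by unfold resid; linarith, by unfold resid; linarith⟩

theorem exists_resid_lt_of_mul_Theta_lt {f : Euc n → ℝ} {c : Euc n → Euc m} {g : Euc m → EReal}
    {x : Euc n} {z y : Euc m} {ρ s : ℝ} (hρ : 0 < ρ)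
    (h : (ρ : EReal) * Theta f c g x z y < s) :
    ∃ v ∈ limSubdiff g z, ρ * resid f c x z y v < s := by
  set a := ‖fderiv ℝ (LagFn f c y) x‖ + ‖c x - z‖
  have hΘ : Theta f c g x z y < ((s / ρ : ℝ) : EReal) := by
    rw [EReal.coe_div, EReal.lt_div_iff (by exact_mod_cast hρ) (EReal.coe_ne_top ρ), mul_comm]
    exact h
  have hdist : ⨅ v ∈ limSubdiff g z, ((‖y - v‖ : ℝ) : EReal) < ((s / ρ - a : ℝ) : EReal) := by
    by_contra! hle
    refine hΘ.not_ge ?_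
    calc ((s / ρ : ℝ) : EReal) = (a : EReal) + ((s / ρ - a : ℝ) : EReal) := by
          rw [← EReal.coe_add]; ring_nf
      _ ≤ Theta f c g x z y := add_le_add_right hle _
  obtain ⟨v, hv, hlt⟩ : ∃ v ∈ limSubdiff g z, ‖y - v‖ < s / ρ - a := by
    simpa only [iInf_lt_iff, EReal.coe_lt_coe_iff, exists_prop] using hdist
  refine ⟨v, hv, ?_⟩
  rw [← lt_div_iff₀' hρ]
  unfold resid
  linarith

theorem mem_tangentCone_of_tendsto {E : Type*} [NormedAddCommGroup E] [NormedSpace ℝ E]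
    {Ω : Set E} {p : ℕ → E} {pbar v : E} {t : ℕ → ℝ} (hp : ∀ k, p k ∈ Ω) (ht : ∀ k, 0 < t k)
    (ht0 : Tendsto t atTop (𝓝 0)) (hv : Tendsto (fun k => (t k)⁻¹ • (p k - pbar)) atTop (𝓝 v)) :
    v ∈ tangentCone Ω pbar :=
  ⟨t, _, ht, ht0, hv, fun k => by rw [smul_inv_smul₀ (ht k).ne', add_sub_cancel]; exact hp k⟩

theorem mem_gDeriv_of_tendsto {g : Euc m → EReal} {z v : ℕ → Euc m} {zbar ybar ζ η : Euc m}
    {t : ℕ → ℝ} (hv : ∀ k, v k ∈ limSubdiff g (z k)) (ht : ∀ k, 0 < t k)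
    (ht0 : Tendsto t atTop (𝓝 0)) (hζ : Tendsto (fun k => (t k)⁻¹ • (z k - zbar)) atTop (𝓝 ζ))
    (hη : Tendsto (fun k => (t k)⁻¹ • (v k - ybar)) atTop (𝓝 η)) :
    η ∈ gDeriv g zbar ybar ζ :=
  mem_tangentCone_of_tendsto (p := fun k => (z k, v k)) hv ht ht0 (by
    simpa only [Prod.mk_sub_mk, Prod.smul_mk] using hζ.prodMk_nhds hη)

theorem _root_.HasFDerivAt.tendsto_smul_sub {E F : Type*} [NormedAddCommGroup E]
    [NormedSpace ℝ E] [NormedAddCommGroup F] [NormedSpace ℝ F] {h : E → F} {D : E →L[ℝ] F}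
    {a u : E} (hd : HasFDerivAt h D a) {s : ℕ → E} {t : ℕ → ℝ} (hs : Tendsto s atTop (𝓝 a))
    (hu : Tendsto (fun k => t k • (s k - a)) atTop (𝓝 u)) :
    Tendsto (fun k => t k • (h (s k) - h a)) atTop (𝓝 (D u)) := by
  have := (hasFDerivWithinAt_univ.2 hd).lim (by simpa using hs.sub_const a)
    (.of_forall fun _ => Set.mem_univ _) hu
  simpa only [add_sub_cancel] using this

theorem _root_.HasFDerivAt.apply_eq_of_tendsto {E F : Type*} [NormedAddCommGroup E]
    [NormedSpace ℝ E] [NormedAddCommGroup F] [NormedSpace ℝ F] {c : E → F} {D : E →L[ℝ] F}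
    {xbar u : E} {ζ : F} (hc : HasFDerivAt c D xbar) {x : ℕ → E} {z : ℕ → F} {t : ℕ → ℝ}
    (hx : Tendsto x atTop (𝓝 xbar)) (hu : Tendsto (fun k => t k • (x k - xbar)) atTop (𝓝 u))
    (hζ : Tendsto (fun k => t k • (z k - c xbar)) atTop (𝓝 ζ))
    (hcz : Tendsto (fun k => t k • (c (x k) - z k)) atTop (𝓝 0)) :
    ζ = D u := by
  have hlim := (hc.tendsto_smul_sub hx hu).sub hcz
  rw [sub_zero] at hlim
  refine tendsto_nhds_unique hζ (hlim.congr fun k => ?_)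
  rw [← smul_sub, sub_sub_sub_cancel_left]

theorem tendsto_inv_smul_zero_of_norm_le {E : Type*} [NormedAddCommGroup E] [NormedSpace ℝ E]
    {a : ℕ → E} {b t : ℕ → ℝ} (ht : ∀ k, 0 < t k)
    (hb : Tendsto (fun k => (t k)⁻¹ * b k) atTop (𝓝 0)) (hab : ∀ k, ‖a k‖ ≤ b k) :
    Tendsto (fun k => (t k)⁻¹ • a k) atTop (𝓝 0) := by
  refine squeeze_zero_norm (fun k => ?_) hb
  rw [norm_smul, norm_inv, Real.norm_of_nonneg (ht k).le]
  exact mul_le_mul_of_nonneg_left (hab k) (inv_nonneg.2 (ht k).le)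

theorem fderiv_lagFn_apply {f : Euc n → ℝ} {c : Euc n → Euc m} {x : Euc n}
    (hf : DifferentiableAt ℝ f x) (hc : DifferentiableAt ℝ c x) (y ybar : Euc m) (w : Euc n) :
    fderiv ℝ (LagFn f c y) x w =
      fderiv ℝ (LagFn f c ybar) x w + inner ℝ (y - ybar) (fderiv ℝ c x w) := by
  have hL : ∀ y', fderiv ℝ (LagFn f c y') x = fderiv ℝ f x + (innerSL ℝ y').comp (fderiv ℝ c x) :=
    fun y' => (hf.hasFDerivAt.add ((innerSL ℝ y').hasFDerivAt.comp x hc.hasFDerivAt)).fderiv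
  simp only [hL, add_apply, ContinuousLinearMap.comp_apply, innerSL_apply_apply, inner_sub_left]
  ring

theorem hessLag_eq_fderiv_fderiv (f : Euc n → ℝ) (c : Euc n → Euc m) (xbar : Euc n)
    (ybar : Euc m) (u w : Euc n) :
    hessLag f c xbar ybar u w = fderiv ℝ (fderiv ℝ (LagFn f c ybar)) xbar u w := by
  rw [hessLag, iteratedFDeriv_two_apply]
  rfl

theorem hessLag_add_inner_eq_zero {f : Euc n → ℝ} {c : Euc n → Euc m}
    (hf : ContDiff ℝ 2 f) (hc : ContDiff ℝ 2 c) {xbar u : Euc n} {ybar η : Euc m}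
    (hgrad : gradLagZero f c xbar ybar) {x : ℕ → Euc n} {y : ℕ → Euc m} {t : ℕ → ℝ}
    (hx : Tendsto x atTop (𝓝 xbar)) (hu : Tendsto (fun k => (t k)⁻¹ • (x k - xbar)) atTop (𝓝 u))
    (hη : Tendsto (fun k => (t k)⁻¹ • (y k - ybar)) atTop (𝓝 η))
    (hstat : Tendsto (fun k => (t k)⁻¹ • fderiv ℝ (LagFn f c (y k)) (x k)) atTop (𝓝 0))
    (w : Euc n) :
    hessLag f c xbar ybar u w + inner ℝ η (fderiv ℝ c xbar w) = 0 := by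
  set G := fderiv ℝ (LagFn f c ybar)
  have hLag : ContDiff ℝ 2 (LagFn f c ybar) := hf.add ((innerSL ℝ ybar).contDiff.comp hc)
  have hG : HasFDerivAt G (fderiv ℝ G xbar) xbar :=
    ((hLag.fderiv_right (m := 1) le_rfl).differentiable one_ne_zero xbar).hasFDerivAt
  have happly : Continuous fun A : Euc n →L[ℝ] ℝ => A w :=
    (ContinuousLinearMap.apply ℝ ℝ w).continuous
  have hHess : Tendsto (fun k => (t k)⁻¹ • (G (x k) - G xbar) w) atTop
      (𝓝 (hessLag f c xbar ybar u w)) := by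
    rw [hessLag_eq_fderiv_fderiv]
    exact (happly.tendsto _).comp (hG.tendsto_smul_sub hx hu)
  have hcross : Tendsto (fun k => inner ℝ ((t k)⁻¹ • (y k - ybar)) (fderiv ℝ c (x k) w)) atTop
      (𝓝 (inner ℝ η (fderiv ℝ c xbar w))) :=
    hη.inner <| (((hc.continuous_fderiv two_ne_zero).clm_apply continuous_const).tendsto
      xbar).comp hx
  refine tendsto_nhds_unique ((hHess.add hcross).congr fun k => ?_) (by
    simpa using (happly.tendsto _).comp hstat)
  have hGxbar : G xbar = 0 := hgrad
  rw [Function.comp_apply, smul_apply, fderiv_lagFn_apply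
    (hf.differentiable two_ne_zero _) (hc.differentiable two_ne_zero _) (y k) ybar w]
  simp only [hGxbar, sub_zero, inner_smul_left, smul_eq_mul, RCLike.conj_to_real]
  ring

theorem eq_zero_of_tendsto_normalized {f : Euc n → ℝ} {c : Euc n → Euc m} {g : Euc m → EReal}
    (hf : ContDiff ℝ 2 f) (hc : ContDiff ℝ 2 c) {xbar : Euc n} {ybar : Euc m}
    (hybar : ybar ∈ Lambda f c g xbar) (hqc : QualCond f c g xbar ybar)
    {P : ℕ → Euc n × Euc m × Euc m} {v : ℕ → Euc m} {t : ℕ → ℝ} {L : Euc n × Euc m × Euc m}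
    (hP : Tendsto P atTop (𝓝 (xbar, c xbar, ybar))) (hv : ∀ k, v k ∈ limSubdiff g (P k).2.1)
    (ht : ∀ k, 0 < t k) (ht0 : Tendsto t atTop (𝓝 0))
    (hres : Tendsto (fun k => (t k)⁻¹ * resid f c (P k).1 (P k).2.1 (P k).2.2 (v k)) atTop (𝓝 0))
    (hL : Tendsto (fun k => (t k)⁻¹ • (P k - (xbar, c xbar, ybar))) atTop (𝓝 L)) :
    L = 0 := by
  obtain ⟨u, ζ, η⟩ := L
  have hx : Tendsto (fun k => (P k).1) atTop (𝓝 xbar) := (continuous_fst.tendsto _).comp hP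
  have hu : Tendsto (fun k => (t k)⁻¹ • ((P k).1 - xbar)) atTop (𝓝 u) :=
    (continuous_fst.tendsto _).comp hL
  have hζ : Tendsto (fun k => (t k)⁻¹ • ((P k).2.1 - c xbar)) atTop (𝓝 ζ) :=
    (continuous_snd.fst.tendsto _).comp hL
  have hη : Tendsto (fun k => (t k)⁻¹ • ((P k).2.2 - ybar)) atTop (𝓝 η) :=
    (continuous_snd.snd.tendsto _).comp hL
  have hbd := fun k => norm_le_resid f c (P k).1 (P k).2.1 (P k).2.2 (v k)
  have hstat : Tendsto (fun k => (t k)⁻¹ • fderiv ℝ (LagFn f c (P k).2.2) (P k).1) atTop (𝓝 0) :=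
    tendsto_inv_smul_zero_of_norm_le (E := Euc n →L[ℝ] ℝ) ht hres fun k => (hbd k).1
  have hcz : Tendsto (fun k => (t k)⁻¹ • (c (P k).1 - (P k).2.1)) atTop (𝓝 0) :=
    tendsto_inv_smul_zero_of_norm_le ht hres fun k => (hbd k).2.1
  have hyv : Tendsto (fun k => (t k)⁻¹ • ((P k).2.2 - v k)) atTop (𝓝 0) :=
    tendsto_inv_smul_zero_of_norm_le ht hres fun k => (hbd k).2.2
  have hζu : ζ = fderiv ℝ c xbar u :=
    (hc.differentiable two_ne_zero xbar).hasFDerivAt.apply_eq_of_tendsto hx hu hζ hcz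
  have hvη : Tendsto (fun k => (t k)⁻¹ • (v k - ybar)) atTop (𝓝 η) := by
    refine (sub_zero η ▸ hη.sub hyv).congr fun k => ?_
    rw [← smul_sub, sub_sub_sub_cancel_left]
  have hgd : η ∈ gDeriv g (c xbar) ybar (fderiv ℝ c xbar u) :=
    hζu ▸ mem_gDeriv_of_tendsto hv ht ht0 hζ hvη
  obtain ⟨rfl, rfl⟩ := hqc u η (hessLag_add_inner_eq_zero hf hc hybar.1 hx hu hη hstat) hgd
  simp [hζu]

theorem not_tendsto_resid_div_norm_sub {f : Euc n → ℝ} {c : Euc n → Euc m} {g : Euc m → EReal}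
    (hf : ContDiff ℝ 2 f) (hc : ContDiff ℝ 2 c) {xbar : Euc n} {ybar : Euc m}
    (hybar : ybar ∈ Lambda f c g xbar) (hqc : QualCond f c g xbar ybar)
    {P : ℕ → Euc n × Euc m × Euc m} {v : ℕ → Euc m}
    (hP : Tendsto P atTop (𝓝 (xbar, c xbar, ybar))) (hne : ∀ k, P k ≠ (xbar, c xbar, ybar))
    (hv : ∀ k, v k ∈ limSubdiff g (P k).2.1) :
    ¬ Tendsto (fun k => ‖P k - (xbar, c xbar, ybar)‖⁻¹ *
      resid f c (P k).1 (P k).2.1 (P k).2.2 (v k)) atTop (𝓝 0) := by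
  intro hres
  set t := fun k => ‖P k - (xbar, c xbar, ybar)‖
  have ht : ∀ k, 0 < t k := fun k => norm_pos_iff.2 (sub_ne_zero.2 (hne k))
  have hsphere : ∀ k, (t k)⁻¹ • (P k - (xbar, c xbar, ybar)) ∈ Metric.sphere 0 1 := fun k => by
    rw [mem_sphere_zero_iff_norm, norm_smul, norm_inv, norm_norm, inv_mul_cancel₀ (ht k).ne']
  obtain ⟨L, hL, φ, hφ, hLlim⟩ := (isCompact_sphere 0 1).tendsto_subseq hsphere
  have hφ' := hφ.tendsto_atTop
  have hL0 : L = 0 := eq_zero_of_tendsto_normalized hf hc hybar hqc (hP.comp hφ')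
    (fun k => hv (φ k)) (fun k => ht (φ k))
    ((tendsto_iff_norm_sub_tendsto_zero.1 hP).comp hφ') (hres.comp hφ') hLlim
  simp [hL0] at hL

theorem norm_add_norm_add_norm_le {E F G : Type*} [SeminormedAddCommGroup E]
    [SeminormedAddCommGroup F] [SeminormedAddCommGroup G] (p : E × F × G) :
    ‖p.1‖ + ‖p.2.1‖ + ‖p.2.2‖ ≤ 3 * ‖p‖ := by
  have h₁ := norm_fst_le p
  have h₂ := (norm_fst_le p.2).trans (norm_snd_le p)
  have h₃ := (norm_snd_le p.2).trans (norm_snd_le p)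
  linarith

theorem statement8_general {n m : ℕ}
    (f : Euc n → ℝ) (c : Euc n → Euc m) (g : Euc m → EReal)
    (hf : ContDiff ℝ 2 f) (hc : ContDiff ℝ 2 c)
    (xbar : Euc n) (ybar : Euc m) (hybar : ybar ∈ Lambda f c g xbar)
    (hqc : ∀ (u : Euc n) (η : Euc m),
      (∀ w : Euc n, hessLag f c xbar ybar u w + (inner ℝ η (fderiv ℝ c xbar w) : ℝ) = 0) →
      η ∈ gDeriv g (c xbar) ybar (fderiv ℝ c xbar u) → u = 0 ∧ η = 0) :
    ∃ ρ : ℝ, 0 < ρ ∧ ∃ U ∈ 𝓝 ((xbar, c xbar, ybar) : Euc n × Euc m × Euc m),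
      ∀ (x : Euc n) (z y : Euc m), (x, z, y) ∈ U → z ∈ edom g →
        ((‖x - xbar‖ + ‖z - c xbar‖ + ‖y - ybar‖ : ℝ) : EReal) ≤
          (ρ : EReal) * Theta f c g x z y := by
  set Pbar : Euc n × Euc m × Euc m := (xbar, c xbar, ybar)
  by_contra! hcon
  have hbad : ∀ k : ℕ, ∃ P ∈ Metric.ball Pbar (1 / (k + 1)), ∃ v ∈ limSubdiff g P.2.1,
      (k + 1) * resid f c P.1 P.2.1 P.2.2 v < ‖P - Pbar‖ := fun k => by
    obtain ⟨x, z, y, hU, -, hlt⟩ :=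
      hcon (3 * (k + 1)) (by positivity) _ (Metric.ball_mem_nhds Pbar Nat.one_div_pos_of_nat)
    obtain ⟨v, hv, hres⟩ := exists_resid_lt_of_mul_Theta_lt (by positivity) hlt
    have := norm_add_norm_add_norm_le ((x, z, y) - Pbar)
    exact ⟨(x, z, y), hU, v, hv, by simp only [Prod.fst_sub, Prod.snd_sub] at this; linarith⟩
  choose P hPball v hv hlt using hbad
  have hres0 : ∀ k, 0 ≤ resid f c (P k).1 (P k).2.1 (P k).2.2 (v k) :=
    fun k => (norm_nonneg _).trans (norm_le_resid f c _ _ _ _).2.2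
  have hpos : ∀ k, 0 < ‖P k - Pbar‖ := fun k => by
    have := hlt k; nlinarith [hres0 k]
  have hP : Tendsto P atTop (𝓝 Pbar) := tendsto_iff_dist_tendsto_zero.2 <|
    squeeze_zero (fun _ => dist_nonneg) (fun k => (hPball k).le)
      tendsto_one_div_add_atTop_nhds_zero_nat
  refine not_tendsto_resid_div_norm_sub hf hc hybar hqc hP
    (fun k => sub_ne_zero.1 (norm_pos_iff.1 (hpos k))) hv ?_
  refine squeeze_zero (fun k => mul_nonneg (inv_nonneg.2 (hpos k).le) (hres0 k)) (fun k => ?_)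
    tendsto_one_div_add_atTop_nhds_zero_nat
  rw [inv_mul_le_iff₀ (hpos k), mul_one_div, le_div_iff₀ (by positivity)]
  linarith [hlt k]

theorem statement8 {n m : ℕ}
    (f : Euc n → ℝ) (c : Euc n → Euc m) (g : Euc m → EReal)
    (hf : ContDiff ℝ 2 f) (hc : ContDiff ℝ 2 c)
    (hgp : ProperFn g) (hglsc : LowerSemicontinuous g) (hgpb : ProxBounded g)
    (hphi : ∃ r : ℝ, (⨅ x : Euc n, ((f x : EReal) + g (c x))) = (r : EReal))
    (xbar : Euc n) (ybar : Euc m) (hybar : ybar ∈ Lambda f c g xbar)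
    (hqc : ∀ (u : Euc n) (η : Euc m),
      (∀ w : Euc n, hessLag f c xbar ybar u w + (inner ℝ η (fderiv ℝ c xbar w) : ℝ) = 0) →
      η ∈ gDeriv g (c xbar) ybar (fderiv ℝ c xbar u) → u = 0 ∧ η = 0) :
    ∃ ρ : ℝ, 0 < ρ ∧ ∃ U ∈ 𝓝 ((xbar, c xbar, ybar) : Euc n × Euc m × Euc m),
      ∀ (x : Euc n) (z y : Euc m), (x, z, y) ∈ U → z ∈ edom g →
        ((‖x - xbar‖ + ‖z - c xbar‖ + ‖y - ybar‖ : ℝ) : EReal) ≤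
          (ρ : EReal) * Theta f c g x z y :=
  statement8_general f c g hf hc xbar ybar hybar hqc

end Paper
end
end

section
/- Let {(x^k, z^k, y^k)} be a sequence generated by the safeguarded implicit augmented Lagrangian algorithm for problem (P) with {ε_k} bounded. Assume that dom g is closed and that the approximate global optimality condition holds: L_{μ_k}(x^k, ŷ^k) ≤ L_{μ_k}(x, ŷ^k) + ε_k for all x ∈ ℝ^n and all k. Then every accumulation point x̄ of {x^k} is a global minimizer of the function x ↦ dist(c(x), dom g); in particular, x̄ is feasible for (P) whenever the feasible set of (P) is nonempty. -/
open Filter Topology Bornology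

noncomputable section

namespace Paper

variable {n m : ℕ}

/-! The penalty update leaves two cases. If the residual `‖c(xᵏ) - zᵏ‖` eventually contracts
by the factor `θ`, it tends to `0`, and since `zᵏ ∈ dom g` this gives `dist(c(x̄), dom g) = 0`.
Otherwise `μₖ` is reduced infinitely often, so `μₖ → 0`. Compare the approximate global
optimality of `xᵏ` with an arbitrary `x`: the Moreau envelope at `c(x) + μₖŷᵏ` is at most
`g(w) + ‖w - c(x) - μₖŷᵏ‖²/(2μₖ)` for any `w ∈ dom g`, and prox-boundedness of `g` with
parameter `ν` bounds `g(zᵏ)` from below. Multiplying by `2μₖ` gives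
  `(1 - 2μₖ/ν) ‖zᵏ - c(xᵏ) - μₖŷᵏ‖² ≤ (‖c(x) - w‖ + μₖ sup ‖Y‖)² + O(μₖ)`,
and letting `k → ∞` along the subsequence yields `dist(c(x̄), dom g) ≤ ‖c(x) - w‖`. -/

theorem tendsto_zero_of_antitone_of_frequently_eq_mul {μ : ℕ → ℝ} {κ : ℝ} (hκ : κ < 1)
    (hμ : Antitone μ) (hnonneg : ∀ k, 0 ≤ μ k) (hfreq : ∃ᶠ k in atTop, μ (k + 1) = κ * μ k) :
    Tendsto μ atTop (𝓝 0) := by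
  have hL : Tendsto μ atTop (𝓝 (⨅ k, μ k)) :=
    tendsto_atTop_ciInf hμ ⟨0, by rintro _ ⟨k, rfl⟩; exact hnonneg k⟩
  have hgap : Tendsto (fun k => μ (k + 1) - κ * μ k) atTop (𝓝 ((⨅ k, μ k) - κ * ⨅ k, μ k)) :=
    ((tendsto_add_atTop_iff_nat 1).2 hL).sub (hL.const_mul κ)
  have hzero : (⨅ k, μ k) - κ * ⨅ k, μ k = 0 :=
    isClosed_singleton.mem_of_frequently_of_tendsto
      (hfreq.mono fun k hk => by simp [Set.mem_singleton_iff, hk]) hgap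
  have hinf : (⨅ k, μ k) = 0 := by
    have : (1 - κ) * ⨅ k, μ k = 0 := by linarith
    exact (mul_eq_zero.1 this).resolve_left (by linarith)
  rwa [hinf] at hL

theorem tendsto_zero_or_tendsto_zero_of_penalty_update {θ κ : ℝ} {V μ : ℕ → ℝ}
    (hθ : θ < 1) (hκ : κ < 1) (hV : ∀ k, 0 ≤ V k) (hμ : ∀ k, 0 < μ k)
    (hupd : ∀ k, μ (k + 1) = if k = 0 ∨ V k ≤ θ * V (k - 1) then μ k else κ * μ k) :
    Tendsto V atTop (𝓝 0) ∨ Tendsto μ atTop (𝓝 0) := by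
  by_cases hdecr : ∀ᶠ k in atTop, V (k + 1) ≤ θ * V k
  · left
    refine (summable_of_ratio_norm_eventually_le hθ ?_).tendsto_atTop_zero
    filter_upwards [hdecr] with k hk
    simpa only [Real.norm_of_nonneg (hV _)] using hk
  · right
    have hanti : Antitone μ := antitone_nat_of_succ_le fun k => by
      rw [hupd k]
      split_ifs
      · exact le_rfl
      · nlinarith [hμ k]
    refine tendsto_zero_of_antitone_of_frequently_eq_mul hκ hanti (fun k => (hμ k).le) ?_
    refine (tendsto_add_atTop_nat 1).frequently ((not_eventually.1 hdecr).mono fun k hk => ?_)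
    rw [hupd (k + 1), if_neg (by simpa using hk)]

def IsProxPoint (g : Euc m → EReal) (μ : ℝ) (u z : Euc m) : Prop :=
  ∀ w, g z + ((‖z - u‖ ^ 2 / (2 * μ) : ℝ) : EReal) ≤ g w + ((‖w - u‖ ^ 2 / (2 * μ) : ℝ) : EReal)

theorem IsProxPoint.mem_edom {g : Euc m → EReal} {μ : ℝ} {u z : Euc m} (hg : ProperFn g)
    (hμ : 0 < μ) (hz : IsProxPoint g μ u z) : z ∈ edom g := by
  obtain ⟨w, hw⟩ := hg.2
  have hle : g z ≤ g z + ((‖z - u‖ ^ 2 / (2 * μ) : ℝ) : EReal) :=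
    le_add_of_nonneg_right (EReal.coe_nonneg.2 (by positivity))
  exact (hle.trans (hz w)).trans_lt (EReal.add_lt_top hw.ne (EReal.coe_ne_top _))

theorem IsProxPoint.moreau_eq {g : Euc m → EReal} {μ : ℝ} {u z : Euc m}
    (hz : IsProxPoint g μ u z) :
    moreau g μ u = g z + ((‖z - u‖ ^ 2 / (2 * μ) : ℝ) : EReal) :=
  le_antisymm (iInf_le _ z) (le_iInf hz)

theorem ALfun_eq_of_isProxPoint {f : Euc n → ℝ} {c : Euc n → Euc m} {g : Euc m → EReal}
    {μ : ℝ} {x : Euc n} {y z : Euc m} (hz : IsProxPoint g μ (c x + μ • y) z)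
    (htop : g z ≠ ⊤) (hbot : g z ≠ ⊥) :
    ALfun f c g μ x y =
      ((f x + (g z).toReal + ‖z - (c x + μ • y)‖ ^ 2 / (2 * μ) - μ / 2 * ‖y‖ ^ 2 : ℝ) : EReal) := by
  obtain ⟨t, ht⟩ : ∃ t : ℝ, g z = t := ⟨_, (EReal.coe_toReal htop hbot).symm⟩
  rw [ALfun, hz.moreau_eq, ht, EReal.toReal_coe]
  norm_cast
  ring

theorem ALfun_le {f : Euc n → ℝ} {c : Euc n → Euc m} {g : Euc m → EReal}
    {μ : ℝ} (x : Euc n) (y : Euc m) {w : Euc m} (htop : g w ≠ ⊤) (hbot : g w ≠ ⊥) :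
    ALfun f c g μ x y ≤
      ((f x + (g w).toReal + ‖w - (c x + μ • y)‖ ^ 2 / (2 * μ) - μ / 2 * ‖y‖ ^ 2 : ℝ) : EReal) := by
  have hmoreau : moreau g μ (c x + μ • y) ≤
      (((g w).toReal + ‖w - (c x + μ • y)‖ ^ 2 / (2 * μ) : ℝ) : EReal) := by
    refine (iInf_le _ w).trans_eq ?_
    rw [← EReal.coe_toReal htop hbot]
    norm_cast
  refine (EReal.sub_le_sub (add_le_add le_rfl hmoreau) le_rfl).trans_eq ?_
  norm_cast
  ring

theorem le_toReal_of_proxBoundedWith {g : Euc m → EReal} {ν b : ℝ} (hν : 0 < ν)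
    (hb : ∀ z, (b : EReal) ≤ g z + ((‖z‖ ^ 2 / (2 * ν) : ℝ) : EReal)) {z : Euc m} (hz : g z ≠ ⊤)
    (u : Euc m) : b - ‖z - u‖ ^ 2 / ν - ‖u‖ ^ 2 / ν ≤ (g z).toReal := by
  have hbot : g z ≠ ⊥ := by
    intro h
    simpa [h] using hb z
  have hbz := hb z
  rw [← EReal.coe_toReal hz hbot] at hbz
  norm_cast at hbz
  have hsplit : ‖z‖ ≤ ‖z - u‖ + ‖u‖ := by simpa using norm_add_le (z - u) u
  have hsq : ‖z‖ ^ 2 ≤ 2 * ‖z - u‖ ^ 2 + 2 * ‖u‖ ^ 2 := by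
    nlinarith [norm_nonneg z, norm_nonneg (z - u), norm_nonneg u, sq_nonneg (‖z - u‖ - ‖u‖)]
  have : ‖z‖ ^ 2 / (2 * ν) ≤ ‖z - u‖ ^ 2 / ν + ‖u‖ ^ 2 / ν := by
    rw [div_le_iff₀ (by positivity)]
    field_simp
    nlinarith
  linarith

theorem sq_le_of_prox_estimate {μ ν V W F G gz b U : ℝ} (hμ : 0 < μ) (hμν : 2 * μ < ν)
    (hkey : F + gz + V ^ 2 / (2 * μ) ≤ G + W ^ 2 / (2 * μ)) (hgz : b - V ^ 2 / ν - U ≤ gz) :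
    V ^ 2 ≤ (2 * μ * (G - F - b + U) + W ^ 2) / (1 - 2 * μ / ν) := by
  have hν : 0 < ν := by linarith
  rw [le_div_iff₀ (by rw [sub_pos, div_lt_one hν]; exact hμν)]
  have h := mul_le_mul_of_nonneg_left (show F + (b - V ^ 2 / ν - U) + V ^ 2 / (2 * μ) ≤
    G + W ^ 2 / (2 * μ) by linarith) (show (0 : ℝ) ≤ 2 * μ by linarith)
  have e1 : 2 * μ * (F + (b - V ^ 2 / ν - U) + V ^ 2 / (2 * μ)) =
      2 * μ * (F + b - U) + V ^ 2 * (1 - 2 * μ / ν) := by field_simp; ring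
  have e2 : 2 * μ * (G + W ^ 2 / (2 * μ)) = 2 * μ * G + W ^ 2 := by field_simp
  rw [e1, e2] at h
  linarith

namespace ALMSeq

variable {f : Euc n → ℝ} {c : Euc n → Euc m} {g : Euc m → EReal} (A : ALMSeq n m f c g)

def ApproxGloballyOptimal : Prop :=
  ∀ k, ∀ x : Euc n, ALfun f c g (A.μ k) (A.x k) (A.yhat k) ≤
    ALfun f c g (A.μ k) x (A.yhat k) + (A.ε k : EReal)

theorem mu_pos (k : ℕ) : 0 < A.μ k := (A.hμthr k).1

theorem isProxPoint (k : ℕ) : IsProxPoint g (A.μ k) (c (A.x k) + A.μ k • A.yhat k) (A.z k) :=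
  A.hprox k

theorem z_mem_edom (hg : ProperFn g) (k : ℕ) : A.z k ∈ edom g :=
  (A.isProxPoint k).mem_edom hg (A.mu_pos k)

theorem infDist_le_norm_sub (hg : ProperFn g) (k : ℕ) :
    Metric.infDist (c (A.x k)) (edom g) ≤ ‖c (A.x k) - A.z k‖ :=
  (Metric.infDist_le_dist_of_mem (A.z_mem_edom hg k)).trans_eq (dist_eq_norm _ _)

theorem exists_norm_yhat_le : ∃ M, ∀ k, ‖A.yhat k‖ ≤ M :=
  let ⟨M, hM⟩ := isBounded_iff_forall_norm_le.1 A.hYbdd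
  ⟨M, fun k => hM _ (A.hyhatY k)⟩

theorem le_of_ALfun_le (hg : ProperFn g)
    (hglobal : A.ApproxGloballyOptimal)
    (k : ℕ) (x : Euc n) {w : Euc m} (hw : w ∈ edom g) :
    f (A.x k) + (g (A.z k)).toReal + ‖A.z k - (c (A.x k) + A.μ k • A.yhat k)‖ ^ 2 / (2 * A.μ k) ≤
      f x + (g w).toReal + A.ε k + ‖w - (c x + A.μ k • A.yhat k)‖ ^ 2 / (2 * A.μ k) := by
  have h := hglobal k x
  rw [ALfun_eq_of_isProxPoint (A.isProxPoint k) (A.z_mem_edom hg k).ne (hg.1 _)] at h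
  have h' := h.trans (add_le_add (ALfun_le x (A.yhat k) hw.ne (hg.1 w)) le_rfl)
  norm_cast at h'
  linarith

theorem infDist_le_of_ALfun_le (hg : ProperFn g)
    (hglobal : A.ApproxGloballyOptimal)
    {ν b : ℝ} (hν : 0 < ν) (hb : ∀ z, (b : EReal) ≤ g z + ((‖z‖ ^ 2 / (2 * ν) : ℝ) : EReal))
    {C M : ℝ} (hC : ∀ k, A.ε k ≤ C) (hM : ∀ k, ‖A.yhat k‖ ≤ M)
    (x : Euc n) {w : Euc m} (hw : w ∈ edom g) {k : ℕ} (hk : 2 * A.μ k < ν) :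
    Metric.infDist (c (A.x k)) (edom g) ≤
      √((2 * A.μ k * (f x + (g w).toReal + C - f (A.x k) - b +
          (‖c (A.x k)‖ + A.μ k * M) ^ 2 / ν) + (dist (c x) w + A.μ k * M) ^ 2) /
        (1 - 2 * A.μ k / ν)) + A.μ k * M := by
  have hμ := A.mu_pos k
  set μ := A.μ k
  set u := c (A.x k) + μ • A.yhat k
  have hshift : ‖μ • A.yhat k‖ ≤ μ * M := by
    rw [norm_smul, Real.norm_of_nonneg hμ.le]
    exact mul_le_mul_of_nonneg_left (hM k) hμ.le
  have hu : ‖u‖ ≤ ‖c (A.x k)‖ + μ * M := (norm_add_le _ _).trans (by linarith)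
  have hW : ‖w - (c x + μ • A.yhat k)‖ ≤ dist (c x) w + μ * M := by
    rw [dist_comm, dist_eq_norm, sub_add_eq_sub_sub]
    exact (norm_sub_le _ _).trans (by linarith)
  have hV := sq_le_of_prox_estimate hμ hk (A.le_of_ALfun_le hg hglobal k x hw)
    (le_toReal_of_proxBoundedWith hν hb (A.z_mem_edom hg k).ne u)
  have hden : 0 < 1 - 2 * μ / ν := by rw [sub_pos, div_lt_one hν]; exact hk
  have hmono : 2 * μ * (f x + (g w).toReal + A.ε k - f (A.x k) - b + ‖u‖ ^ 2 / ν) +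
      ‖w - (c x + μ • A.yhat k)‖ ^ 2 ≤ 2 * μ * (f x + (g w).toReal + C - f (A.x k) - b +
        (‖c (A.x k)‖ + μ * M) ^ 2 / ν) + (dist (c x) w + μ * M) ^ 2 := by
    gcongr
    exact hC k
  calc Metric.infDist (c (A.x k)) (edom g) ≤ ‖c (A.x k) - A.z k‖ := A.infDist_le_norm_sub hg k
    _ ≤ ‖A.z k - u‖ + μ * M := by
        rw [show c (A.x k) - A.z k = -(A.z k - u) - μ • A.yhat k by simp only [u]; abel]
        exact (norm_sub_le _ _).trans (by rw [norm_neg]; linarith)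
    _ ≤ _ := by
        gcongr
        exact (le_abs_self _).trans (Real.abs_le_sqrt (hV.trans
          (div_le_div_of_nonneg_right hmono hden.le)))

theorem infDist_le_dist_of_tendsto_mu_zero (hf : Continuous f) (hc : Continuous c)
    (hg : ProperFn g) (hgpb : ProxBounded g) (hε : ∃ C, ∀ k, A.ε k ≤ C)
    (hglobal : A.ApproxGloballyOptimal)
    {l : Filter ℕ} [l.NeBot] {xbar : Euc n} (hx : Tendsto A.x l (𝓝 xbar))
    (hμ : Tendsto A.μ l (𝓝 0)) (x : Euc n) {w : Euc m} (hw : w ∈ edom g) :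
    Metric.infDist (c xbar) (edom g) ≤ dist (c x) w := by
  obtain ⟨ν, hν, b, hb⟩ := hgpb
  obtain ⟨C, hC⟩ := hε
  obtain ⟨M, hM⟩ := A.exists_norm_yhat_le
  have hcx : Tendsto (fun k => c (A.x k)) l (𝓝 (c xbar)) := (hc.tendsto xbar).comp hx
  have hlhs : Tendsto (fun k => Metric.infDist (c (A.x k)) (edom g)) l
      (𝓝 (Metric.infDist (c xbar) (edom g))) :=
    ((Metric.continuous_infDist_pt _).tendsto _).comp hcx
  have hgap : Tendsto (fun k => 2 * A.μ k * (f x + (g w).toReal + C - f (A.x k) - b +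
      (‖c (A.x k)‖ + A.μ k * M) ^ 2 / ν)) l (𝓝 0) := by
    simpa using (hμ.const_mul 2).mul
      (((tendsto_const_nhds.sub ((hf.tendsto xbar).comp hx)).sub tendsto_const_nhds).add
        (((hcx.norm.add (hμ.mul_const M)).pow 2).div_const ν))
  have hdist : Tendsto (fun k => (dist (c x) w + A.μ k * M) ^ 2) l (𝓝 (dist (c x) w ^ 2)) := by
    simpa using (tendsto_const_nhds.add (hμ.mul_const M)).pow 2
  have hden : Tendsto (fun k => 1 - 2 * A.μ k / ν) l (𝓝 1) := by
    simpa using tendsto_const_nhds.sub ((hμ.const_mul 2).div_const ν)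
  have hrhs := (((hgap.add hdist).div hden one_ne_zero).sqrt).add (hμ.mul_const M)
  rw [zero_add, div_one, Real.sqrt_sq dist_nonneg, zero_mul, add_zero] at hrhs
  have hsmall : ∀ᶠ k in l, 2 * A.μ k < ν :=
    (hμ.eventually (gt_mem_nhds (half_pos hν))).mono fun k hk => by linarith
  exact le_of_tendsto_of_tendsto hlhs hrhs
    (hsmall.mono fun k hk => A.infDist_le_of_ALfun_le hg hglobal hν hb hC hM x hw hk)

theorem infDist_eq_zero_of_tendsto_residual (hc : Continuous c) (hg : ProperFn g)
    {l : Filter ℕ} [l.NeBot] {xbar : Euc n} (hx : Tendsto A.x l (𝓝 xbar))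
    (hV : Tendsto (fun k => ‖c (A.x k) - A.z k‖) l (𝓝 0)) :
    Metric.infDist (c xbar) (edom g) = 0 :=
  tendsto_nhds_unique
    ((((Metric.continuous_infDist_pt _).tendsto _).comp (hc.tendsto xbar)).comp hx)
    (squeeze_zero (fun _ => Metric.infDist_nonneg) (A.infDist_le_norm_sub hg) hV)

end ALMSeq

theorem statement11_general {n m : ℕ}
    (f : Euc n → ℝ) (c : Euc n → Euc m) (g : Euc m → EReal)
    (hf : ContDiff ℝ 2 f) (hc : ContDiff ℝ 2 c)
    (hgp : ProperFn g) (hgpb : ProxBounded g)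
    (A : ALMSeq n m f c g)
    (hεbdd : ∃ C : ℝ, ∀ k, A.ε k ≤ C)
    (hdomcl : IsClosed (edom g))
    (hglobal : ∀ k, ∀ x : Euc n,
      ALfun f c g (A.μ k) (A.x k) (A.yhat k) ≤
        ALfun f c g (A.μ k) x (A.yhat k) + (A.ε k : EReal))
    (xbar : Euc n) (K : ℕ → ℕ) (hK : StrictMono K)
    (hacc : Tendsto (fun k => A.x (K k)) atTop (𝓝 xbar)) :
    (∀ x : Euc n, Metric.infDist (c xbar) (edom g) ≤ Metric.infDist (c x) (edom g)) ∧
      ((∃ x : Euc n, c x ∈ edom g) → c xbar ∈ edom g) := by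
  have hdom : (edom g).Nonempty := hgp.2
  have hx : Tendsto A.x (map K atTop) (𝓝 xbar) := tendsto_map'_iff.2 hacc
  have hmin : ∀ x, Metric.infDist (c xbar) (edom g) ≤ Metric.infDist (c x) (edom g) := by
    rcases tendsto_zero_or_tendsto_zero_of_penalty_update (V := fun k => ‖c (A.x k) - A.z k‖)
      A.hθ.2 A.hκ.2 (fun _ => norm_nonneg _) A.mu_pos A.hμupd with hV | hμ
    · intro x
      rw [A.infDist_eq_zero_of_tendsto_residual hc.continuous hgp hx
        (hV.mono_left hK.tendsto_atTop)]
      exact Metric.infDist_nonneg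
    · exact fun x => (Metric.le_infDist hdom).2 fun w hw =>
        A.infDist_le_dist_of_tendsto_mu_zero hf.continuous hc.continuous hgp hgpb hεbdd hglobal hx
          (hμ.mono_left hK.tendsto_atTop) x hw
  refine ⟨hmin, fun ⟨x, hx⟩ => (hdomcl.mem_iff_infDist_zero hdom).2 ?_⟩
  exact le_antisymm ((hmin x).trans_eq (Metric.infDist_zero_of_mem hx)) Metric.infDist_nonneg

theorem statement11 {n m : ℕ}
    (f : Euc n → ℝ) (c : Euc n → Euc m) (g : Euc m → EReal)
    (hf : ContDiff ℝ 2 f) (hc : ContDiff ℝ 2 c)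
    (hgp : ProperFn g) (hglsc : LowerSemicontinuous g) (hgpb : ProxBounded g)
    (hphi : ∃ r : ℝ, (⨅ x : Euc n, ((f x : EReal) + g (c x))) = (r : EReal))
    (A : ALMSeq n m f c g)
    (hεbdd : ∃ C : ℝ, ∀ k, A.ε k ≤ C)
    (hdomcl : IsClosed (edom g))
    (hglobal : ∀ k, ∀ x : Euc n,
      ALfun f c g (A.μ k) (A.x k) (A.yhat k) ≤
        ALfun f c g (A.μ k) x (A.yhat k) + (A.ε k : EReal))
    (xbar : Euc n) (K : ℕ → ℕ) (hK : StrictMono K)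
    (hacc : Tendsto (fun k => A.x (K k)) atTop (𝓝 xbar)) :
    (∀ x : Euc n, Metric.infDist (c xbar) (edom g) ≤ Metric.infDist (c x) (edom g)) ∧
      ((∃ x : Euc n, c x ∈ edom g) → c xbar ∈ edom g) :=
  statement11_general f c g hf hc hgp hgpb A hεbdd hdomcl hglobal xbar K hK hacc

end Paper
end
end
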